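/- arXiv:1502.01999 — 7 statements merged into one kernel-verified Lean document; each statement's English description precedes it below -/
import Mathlib

section
/- For every i ∈ {1,…,M} and every n ≥ 1, the expected L¹-error of the two-step estimate satisfies E∫_ℝ |f̂_i(t) − f_i(t)| dt ≤ E∫_ℝ |f̄_i(t) − f_i(t)| dt + (4‖K‖₁/α_i)·φ_n + (2√6·‖K‖₁/α_i)·exp(−n·α_i²/4) + ‖K‖₁·(1−α_i)^n. -/
/-!
Both estimates are kernel sums `∑ₖ wₖ K_h(t - Y_k)` over the same sample, with the label
weights `ŵₖ = 1{Îₖ = i} / N̂_i` and `wₖ = 1{Iₖ = i} / N_i`, so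
`‖f̂_i - f̄_i‖₁ ≤ ‖K‖₁ ∑ₖ |ŵₖ - wₖ|`. Both weight vectors have total mass at most one, so
`∑ₖ |ŵₖ - wₖ| ≤ 2`; comparing the two denominators also gives `∑ₖ |ŵₖ - wₖ| ≤ 2 D / N_i`
with `D = #{k : Îₖ ≠ Iₖ}`. Use the first bound on the event `N_i ≤ n α_i / 2`, which has
probability at most `exp (-n α_i² / 2)` by Hoeffding's inequality, and the second one
elsewhere; finally `E D ≤ n φ_n`.
-/

open MeasureTheory ProbabilityTheory

section Weights

variable {ι : Type*} (s : Finset ι) {a b d : ι → ℝ}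

lemma sum_abs_div_sum_le_one (ha : ∀ k, 0 ≤ a k) : ∑ k ∈ s, |a k / ∑ j ∈ s, a j| ≤ 1 := by
  have hA : 0 ≤ ∑ j ∈ s, a j := Finset.sum_nonneg fun k _ => ha k
  simp_rw [abs_of_nonneg (div_nonneg (ha _) hA), ← Finset.sum_div]
  exact div_self_le_one _

lemma sum_abs_div_sum_sub_div_sum_le_two (ha : ∀ k, 0 ≤ a k) (hb : ∀ k, 0 ≤ b k) :
    ∑ k ∈ s, |a k / ∑ j ∈ s, a j - b k / ∑ j ∈ s, b j| ≤ 2 := by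
  calc ∑ k ∈ s, |a k / ∑ j ∈ s, a j - b k / ∑ j ∈ s, b j|
      ≤ ∑ k ∈ s, (|a k / ∑ j ∈ s, a j| + |b k / ∑ j ∈ s, b j|) :=
        Finset.sum_le_sum fun k _ => abs_sub _ _
    _ ≤ 2 := by
      rw [Finset.sum_add_distrib]
      linarith [sum_abs_div_sum_le_one s ha, sum_abs_div_sum_le_one s hb]

lemma sum_abs_div_sum_sub_div_sum_le (ha : ∀ k, 0 ≤ a k) (hab : ∀ k, |a k - b k| ≤ d k)
    (hB : 0 < ∑ j ∈ s, b j) :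
    ∑ k ∈ s, |a k / ∑ j ∈ s, a j - b k / ∑ j ∈ s, b j|
      ≤ 2 * (∑ k ∈ s, d k) / ∑ j ∈ s, b j := by
  set A := ∑ j ∈ s, a j
  set B := ∑ j ∈ s, b j
  have hA : 0 ≤ A := Finset.sum_nonneg fun k _ => ha k
  have hdiff : |A - B| ≤ ∑ k ∈ s, d k := by
    rw [← Finset.sum_sub_distrib]
    exact (Finset.abs_sum_le_sum_abs _ _).trans (Finset.sum_le_sum fun k _ => hab k)
  have hcorr : A * |A⁻¹ - B⁻¹| ≤ (∑ k ∈ s, d k) / B := by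
    rcases hA.eq_or_lt with hA0 | hA0
    · rw [← hA0, zero_mul]
      exact div_nonneg ((abs_nonneg _).trans hdiff) hB.le
    · rw [← abs_of_pos hA0, ← abs_mul, abs_of_pos hA0, mul_sub, mul_inv_cancel₀ hA0.ne',
        ← div_eq_mul_inv, one_sub_div hB.ne', abs_div, abs_of_pos hB, abs_sub_comm]
      gcongr
  calc ∑ k ∈ s, |a k / A - b k / B| = ∑ k ∈ s, |(a k - b k) / B + a k * (A⁻¹ - B⁻¹)| := by
        refine Finset.sum_congr rfl fun k _ => ?_
        congr 1
        ring
    _ ≤ ∑ k ∈ s, (d k / B + a k * |A⁻¹ - B⁻¹|) := by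
        refine Finset.sum_le_sum fun k _ => (abs_add_le _ _).trans ?_
        rw [abs_div, abs_of_pos hB, abs_mul, abs_of_nonneg (ha k)]
        gcongr
        exact hab k
    _ = (∑ k ∈ s, d k) / B + A * |A⁻¹ - B⁻¹| := by
        rw [Finset.sum_add_distrib, Finset.sum_div, Finset.sum_mul]
    _ ≤ 2 * (∑ k ∈ s, d k) / B := by rw [mul_div_assoc, two_mul]; gcongr

lemma sum_abs_div_sum_sub_div_sum_le_ite (ha : ∀ k, 0 ≤ a k) (hb : ∀ k, 0 ≤ b k)
    (hab : ∀ k, |a k - b k| ≤ d k) {r : ℝ} (hr : 0 < r) :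
    ∑ k ∈ s, |a k / ∑ j ∈ s, a j - b k / ∑ j ∈ s, b j|
      ≤ (if ∑ j ∈ s, b j ≤ r then 2 else 0) + 2 / r * ∑ k ∈ s, d k := by
  have hd : 0 ≤ ∑ k ∈ s, d k := Finset.sum_nonneg fun k _ => (abs_nonneg _).trans (hab k)
  split_ifs with hBr
  · linarith [sum_abs_div_sum_sub_div_sum_le_two s ha hb,
      mul_nonneg (div_nonneg zero_le_two hr.le) hd]
  · push Not at hBr
    calc _ ≤ 2 * (∑ k ∈ s, d k) / ∑ j ∈ s, b j :=
          sum_abs_div_sum_sub_div_sum_le s ha hab (hr.trans hBr)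
      _ ≤ 2 * (∑ k ∈ s, d k) / r := by gcongr
      _ = 0 + 2 / r * ∑ k ∈ s, d k := by ring

end Weights

lemma measureReal_sum_le_half_mean_le {Ω ι : Type*} [MeasurableSpace Ω] {P : Measure Ω}
    [IsProbabilityMeasure P] [Fintype ι] {X : ι → Ω → ℝ} (hindep : iIndepFun X P)
    (hmeas : ∀ k, Measurable (X k)) (hX : ∀ k ω, X k ω ∈ Set.Icc 0 1) {p : ℝ}
    (hp : ∀ k, P[X k] = p) (hp0 : 0 ≤ p) :
    P.real {ω | ∑ k, X k ω ≤ Fintype.card ι * p / 2}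
      ≤ Real.exp (-(Fintype.card ι) * p ^ 2 / 2) := by
  have hsubG : ∀ k ∈ Finset.univ, HasSubgaussianMGF (fun ω => p - X k ω) (1 / 4) P := by
    intro k _
    have h := hasSubgaussianMGF_of_mem_Icc (μ := P) (a := -1) (b := 0)
      (hmeas k).neg.aemeasurable (ae_of_all _ fun ω => by
        obtain ⟨h0, h1⟩ := hX k ω
        exact ⟨by simpa using h1, by simpa using h0⟩)
    convert h using 1
    · ext ω
      simp only [Pi.neg_apply, integral_neg, hp k, sub_neg_eq_add]
      ring
    · ext
      norm_num
  have hindep' : iIndepFun (fun k ω => p - X k ω) P :=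
    hindep.comp (fun _ x => p - x) fun _ => measurable_const.sub measurable_id
  convert HasSubgaussianMGF.measure_sum_ge_le_of_iIndepFun hindep' hsubG
    (ε := Fintype.card ι * p / 2) (by positivity) using 2
  · ext ω
    simp only [Set.mem_ofPred_eq, Finset.sum_sub_distrib, Finset.sum_const, Finset.card_univ,
      nsmul_eq_mul]
    constructor <;> intro h <;> linarith
  · rcases eq_or_ne (Fintype.card ι : ℝ) 0 with hn | hn
    · simp [hn]
    · simp only [Finset.sum_const, Finset.card_univ, nsmul_eq_mul]
      push_cast
      field_simp
      ring

lemma integral_abs_sub_le_add {α : Type*} [MeasurableSpace α] {μ : Measure α}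
    {u v f : α → ℝ} (hu : Integrable u μ) (hv : Integrable v μ) (hf : Integrable f μ) :
    ∫ t, |u t - f t| ∂μ ≤ (∫ t, |v t - f t| ∂μ) + ∫ t, |u t - v t| ∂μ := by
  calc ∫ t, |u t - f t| ∂μ ≤ ∫ t, (|v t - f t| + |u t - v t|) ∂μ :=
        integral_mono (hu.sub hf).abs ((hv.sub hf).abs.add (hu.sub hv).abs) fun t =>
          (abs_sub_le _ _ _).trans_eq (add_comm _ _)
    _ = _ := integral_add (hv.sub hf).abs (hu.sub hv).abs

lemma integrable_inv_mul_comp_div {K : ℝ → ℝ} (hK : Integrable K) (h : ℝ) :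
    Integrable (fun u => h⁻¹ * K (u / h)) := by
  rcases eq_or_ne h 0 with rfl | hh
  · simp
  · exact (hK.comp_div hh).const_mul _

lemma integral_abs_inv_mul_comp_div (K : ℝ → ℝ) {h : ℝ} (hh : 0 < h) :
    ∫ u, |h⁻¹ * K (u / h)| = ∫ u, |K u| := by
  simp_rw [abs_mul, abs_of_pos (inv_pos.2 hh)]
  rw [integral_const_mul, Measure.integral_comp_div (fun u => |K u|), abs_of_pos hh,
    smul_eq_mul, inv_mul_cancel_left₀ hh.ne']

section KernelSum

variable {ι : Type*} [Fintype ι]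

def kernelSum (g : ℝ → ℝ) (w y : ι → ℝ) (t : ℝ) : ℝ :=
  ∑ k, w k * g (t - y k)

variable {g f : ℝ → ℝ}

lemma kernelSum_sub (g : ℝ → ℝ) (w w' y : ι → ℝ) (t : ℝ) :
    kernelSum g w y t - kernelSum g w' y t = kernelSum g (w - w') y t := by
  simp only [kernelSum, ← Finset.sum_sub_distrib, Pi.sub_apply, sub_mul]

lemma integrable_kernelSum (hg : Integrable g) (w y : ι → ℝ) :
    Integrable (kernelSum g w y) :=
  integrable_finsetSum _ fun k _ => (hg.comp_sub_right (y k)).const_mul (w k)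

lemma integral_abs_kernelSum_le (hg : Integrable g) (w y : ι → ℝ) :
    ∫ t, |kernelSum g w y t| ≤ (∑ k, |w k|) * ∫ t, |g t| := by
  have hint : ∀ k, Integrable (fun t => |w k| * |g (t - y k)|) := fun k =>
    (hg.abs.comp_sub_right (y k)).const_mul _
  calc ∫ t, |kernelSum g w y t| ≤ ∫ t, ∑ k, |w k| * |g (t - y k)| := by
        refine integral_mono (integrable_kernelSum hg w y).abs
          (integrable_finsetSum _ fun k _ => hint k)
          fun t => (Finset.abs_sum_le_sum_abs _ _).trans_eq ?_
        simp only [abs_mul]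
    _ = (∑ k, |w k|) * ∫ t, |g t| := by
        rw [integral_finsetSum _ fun k _ => hint k, Finset.sum_mul]
        refine Finset.sum_congr rfl fun k _ => ?_
        rw [integral_const_mul, integral_sub_right_eq_self (fun t => |g t|)]

lemma kernelSum_ae_eq {g' : ℝ → ℝ} (hgg' : g =ᵐ[volume] g') (w y : ι → ℝ) :
    kernelSum g w y =ᵐ[volume] kernelSum g' w y := by
  have hall : ∀ᵐ t, ∀ k, g (t - y k) = g' (t - y k) := by
    rw [ae_all_iff]
    exact fun k =>
      (measurePreserving_sub_right volume (y k)).quasiMeasurePreserving.ae_eq_comp hgg'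
  filter_upwards [hall] with t ht
  simp only [kernelSum, ht]

lemma integral_abs_kernelSum_sub_le (hg : Integrable g) (hf : Integrable f)
    {a b d y : ι → ℝ} (ha : ∀ k, 0 ≤ a k) (hb : ∀ k, 0 ≤ b k) (hab : ∀ k, |a k - b k| ≤ d k)
    {r : ℝ} (hr : 0 < r) :
    ∫ t, |kernelSum g (fun k => a k / ∑ j, a j) y t - f t|
      ≤ (∫ t, |kernelSum g (fun k => b k / ∑ j, b j) y t - f t|)
        + (∫ t, |g t|) * ((if ∑ j, b j ≤ r then 2 else 0) + 2 / r * ∑ k, d k) := by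
  refine (integral_abs_sub_le_add (integrable_kernelSum hg _ _) (integrable_kernelSum hg _ _)
    hf).trans (add_le_add_right ?_ _)
  simp_rw [kernelSum_sub]
  refine (integral_abs_kernelSum_le hg _ _).trans ?_
  rw [mul_comm]
  exact mul_le_mul_of_nonneg_left (sum_abs_div_sum_sub_div_sum_le_ite _ ha hb hab hr)
    (integral_nonneg fun t => abs_nonneg _)

variable {Ω : Type*} [MeasurableSpace Ω]

lemma measurable_kernelSum_uncurry (hg : Measurable g) {w y : ι → Ω → ℝ}
    (hw : ∀ k, Measurable (w k)) (hy : ∀ k, Measurable (y k)) :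
    Measurable fun p : Ω × ℝ => kernelSum g (w · p.1) (y · p.1) p.2 := by
  unfold kernelSum
  fun_prop

lemma integrable_integral_abs_kernelSum_sub {P : Measure Ω} [IsFiniteMeasure P]
    (hg : Integrable g) (hf : Integrable f) {w y : ι → Ω → ℝ}
    (hw : ∀ k, Measurable (w k)) (hy : ∀ k, Measurable (y k)) {C : ℝ}
    (hC : ∀ ω, ∑ k, |w k ω| ≤ C) :
    Integrable (fun ω => ∫ t, |kernelSum g (w · ω) (y · ω) t - f t|) P := by
  -- `g` and `f` are only a.e. strongly measurable; their measurable modifications change no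
  -- `t`-integral, since translations preserve Lebesgue measure
  have hmeas : AEStronglyMeasurable
      (fun ω => ∫ t, |kernelSum g (w · ω) (y · ω) t - f t|) P := by
    have hG : Measurable fun p : Ω × ℝ =>
        |kernelSum (hg.1.mk g) (w · p.1) (y · p.1) p.2 - hf.1.mk f p.2| :=
      ((measurable_kernelSum_uncurry hg.1.stronglyMeasurable_mk.measurable hw hy).sub
        (hf.1.stronglyMeasurable_mk.measurable.comp measurable_snd)).abs
    refine (hG.stronglyMeasurable.integral_prod_right' (ν := volume)).aestronglyMeasurable.congr
      (ae_of_all _ fun ω => integral_congr_ae ?_)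
    filter_upwards [kernelSum_ae_eq hg.1.ae_eq_mk (w · ω) (y · ω), hf.1.ae_eq_mk] with t h1 h2
    rw [h1, h2]
  refine Integrable.mono' (integrable_const (C * (∫ t, |g t|) + ∫ t, |f t|)) hmeas
    (ae_of_all _ fun ω => ?_)
  have hgω := integrable_kernelSum hg (w · ω) (y · ω)
  rw [Real.norm_eq_abs, abs_of_nonneg (integral_nonneg fun t => abs_nonneg _)]
  calc ∫ t, |kernelSum g (w · ω) (y · ω) t - f t|
      ≤ ∫ t, (|kernelSum g (w · ω) (y · ω) t| + |f t|) :=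
        integral_mono (hgω.sub hf).abs (hgω.abs.add hf.abs) fun t => abs_sub _ _
    _ ≤ C * (∫ t, |g t|) + ∫ t, |f t| := by
        rw [integral_add hgω.abs hf.abs]
        exact add_le_add_left ((integral_abs_kernelSum_le hg _ _).trans
          (mul_le_mul_of_nonneg_right (hC ω) (integral_nonneg fun t => abs_nonneg _))) _

end KernelSum

theorem integral_integral_abs_kernelSum_sub_le {Ω ι : Type*} [MeasurableSpace Ω]
    {P : Measure Ω} [IsProbabilityMeasure P] [Fintype ι] [Nonempty ι] {g f : ℝ → ℝ}
    (hg : Integrable g) (hf : Integrable f) {Y x xhat d : ι → Ω → ℝ}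
    (hY : ∀ k, Measurable (Y k)) (hx : ∀ k, Measurable (x k))
    (hx01 : ∀ k ω, x k ω ∈ Set.Icc 0 1) (hxhat : ∀ k ω, 0 ≤ xhat k ω)
    (hd : ∀ k ω, |xhat k ω - x k ω| ≤ d k ω) (hdint : ∀ k, Integrable (d k) P)
    (hindep : iIndepFun x P) {p : ℝ} (hp : 0 < p) (hxp : ∀ k, P[x k] = p)
    {φ : ℝ} (hdφ : ∀ k, P[d k] ≤ φ) :
    ∫ ω, (∫ t, |kernelSum g (fun k => xhat k ω / ∑ j, xhat j ω) (Y · ω) t - f t|) ∂P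
      ≤ (∫ ω, (∫ t, |kernelSum g (fun k => x k ω / ∑ j, x j ω) (Y · ω) t - f t|) ∂P)
        + 4 * (∫ t, |g t|) / p * φ
        + 2 * (∫ t, |g t|) * Real.exp (-(Fintype.card ι) * p ^ 2 / 2) := by
  set c := ∫ t, |g t|
  set n : ℝ := (Fintype.card ι : ℝ)
  set r := n * p / 2
  have hn : 0 < n := Nat.cast_pos.2 Fintype.card_pos
  have hr : 0 < r := by positivity
  set S := {ω | ∑ k, x k ω ≤ r}
  have hS : MeasurableSet S :=
    measurableSet_le (Finset.measurable_sum _ fun k _ => hx k) measurable_const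
  set oracleError := fun ω => ∫ t, |kernelSum g (fun k => x k ω / ∑ j, x j ω) (Y · ω) t - f t|
  have horacle : Integrable oracleError P :=
    integrable_integral_abs_kernelSum_sub hg hf
      (fun k => (hx k).div (Finset.measurable_sum _ fun j _ => hx j)) hY
      fun ω => sum_abs_div_sum_le_one _ fun k => (hx01 k ω).1
  have hS2 : Integrable (S.indicator fun _ => (2 : ℝ)) P := (integrable_const 2).indicator hS
  have hD : Integrable (fun ω => 2 / r * ∑ k, d k ω) P :=
    (integrable_finsetSum _ fun k _ => hdint k).const_mul _
  set bound := fun ω => c * (S.indicator (fun _ => 2) ω + 2 / r * ∑ k, d k ω)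
  have hbound : Integrable bound P := (hS2.add hD).const_mul c
  have hpoint : ∀ ω,
      ∫ t, |kernelSum g (fun k => xhat k ω / ∑ j, xhat j ω) (Y · ω) t - f t|
        ≤ oracleError ω + bound ω := fun ω => by
    convert integral_abs_kernelSum_sub_le hg hf (hxhat · ω) (fun k => (hx01 k ω).1) (hd · ω) hr
      using 4
    simp only [S, Set.indicator_apply, Set.mem_ofPred_eq]
  calc _ ≤ ∫ ω, (oracleError ω + bound ω) ∂P :=
        integral_mono_of_nonneg (ae_of_all _ fun ω => integral_nonneg fun t => abs_nonneg _)
          (horacle.add hbound) (ae_of_all _ hpoint)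
    _ = (∫ ω, oracleError ω ∂P) + c * (P.real S * 2 + 2 / r * ∑ k, P[d k]) := by
        rw [integral_add horacle hbound, integral_const_mul,
          integral_add hS2 hD, integral_indicator_const _ hS, integral_const_mul,
          integral_finsetSum _ fun k _ => hdint k, smul_eq_mul]
    _ ≤ (∫ ω, oracleError ω ∂P) + c * (Real.exp (-n * p ^ 2 / 2) * 2 + 2 / r * (n * φ)) := by
        gcongr
        · exact measureReal_sum_le_half_mean_le hindep hx hx01 hxp hp.le
        · calc ∑ k, P[d k] ≤ ∑ _k : ι, φ := Finset.sum_le_sum fun k _ => hdφ k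
            _ = n * φ := by simp [n]
    _ = _ := by
        simp only [r]
        field_simp
        ring

lemma abs_ite_sub_ite_le_indicator {Ω β : Type*} [DecidableEq β] (A B : Ω → β) (c : β)
    (ω : Ω) :
    |(if A ω = c then (1 : ℝ) else 0) - if B ω = c then 1 else 0|
      ≤ {ω | A ω ≠ B ω}.indicator 1 ω := by
  by_cases hAB : A ω = B ω
  · simp [hAB]
  · rw [Set.indicator_of_mem (show ω ∈ {ω | A ω ≠ B ω} from hAB), Pi.one_apply]
    split_ifs <;> norm_num

lemma integral_ite_eq_measureReal {Ω β : Type*} [MeasurableSpace Ω] [MeasurableSpace β]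
    [MeasurableSingletonClass β] [DecidableEq β] {P : Measure Ω} {X : Ω → β}
    (hX : Measurable X) (b : β) :
    ∫ ω, (if X ω = b then (1 : ℝ) else 0) ∂P = P.real (X ⁻¹' {b}) := by
  have hind : (fun ω => if X ω = b then (1 : ℝ) else 0) = (X ⁻¹' {b}).indicator 1 := by
    ext ω
    by_cases hb : X ω = b <;> simp [hb]
  rw [hind, integral_indicator_one (hX (measurableSet_singleton b))]

noncomputable def labelWeights {ι β : Type*} [Fintype ι] [DecidableEq β] (L : ι → β) (i : β)
    (k : ι) : ℝ :=
  (if L k = i then 1 else 0) / ∑ j, if L j = i then 1 else 0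

lemma inv_card_filter_mul_sum_eq_kernelSum {ι β : Type*} [Fintype ι] [DecidableEq β]
    {Kh : ℝ → ℝ → ℝ} {g : ℝ → ℝ} (hKh : ∀ t y, Kh t y = g (t - y))
    (L : ι → β) (i : β) (y : ι → ℝ) (t : ℝ) :
    ((Finset.univ.filter fun k => L k = i).card : ℝ)⁻¹
        * ∑ k, Kh t (y k) * (if L k = i then 1 else 0)
      = kernelSum g (labelWeights L i) y t := by
  rw [Finset.card_filter, Nat.cast_sum, Finset.mul_sum]
  refine Finset.sum_congr rfl fun k _ => ?_
  push_cast
  rw [hKh, labelWeights]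
  ring

theorem integral_integral_abs_kernelSum_labelWeights_sub_le {Ω ι β : Type*} [MeasurableSpace Ω]
    [MeasurableSpace β] [MeasurableSingletonClass β] [DecidableEq β] {P : Measure Ω}
    [IsProbabilityMeasure P] [Fintype ι] [Nonempty ι] {g f : ℝ → ℝ} (hg : Integrable g)
    (hf : Integrable f) {Y : ι → Ω → ℝ} {L Lhat : ι → Ω → β} (hY : ∀ k, Measurable (Y k))
    (hL : ∀ k, Measurable (L k)) (hdset : ∀ k, MeasurableSet {ω | Lhat k ω ≠ L k ω})
    (hindep : iIndepFun L P)
    {i : β} {p : ℝ} (hp : 0 < p) (hLp : ∀ k, P.real (L k ⁻¹' {i}) = p)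
    {φ : ℝ} (hφ : ∀ k, P.real {ω | Lhat k ω ≠ L k ω} ≤ φ) :
    ∫ ω, (∫ t, |kernelSum g (labelWeights (Lhat · ω) i) (Y · ω) t - f t|) ∂P
      ≤ (∫ ω, (∫ t, |kernelSum g (labelWeights (L · ω) i) (Y · ω) t - f t|) ∂P)
        + 4 * (∫ t, |g t|) / p * φ
        + 2 * (∫ t, |g t|) * Real.exp (-(Fintype.card ι) * p ^ 2 / 2) := by
  have hind : Measurable fun b : β => if b = i then (1 : ℝ) else 0 :=
    Measurable.ite (measurableSet_singleton i) measurable_const measurable_const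
  exact integral_integral_abs_kernelSum_sub_le hg hf hY (fun k => hind.comp (hL k))
    (fun k ω => by by_cases hk : L k ω = i <;> simp [hk]) (fun k ω => by positivity)
    (fun k => abs_ite_sub_ite_le_indicator (Lhat k) (L k) i)
    (fun k => (integrable_const 1).indicator (hdset k))
    (hindep.comp _ fun _ => hind) hp
    (fun k => (integral_ite_eq_measureReal (hL k) i).trans (hLp k))
    (fun k => (integral_indicator_one (hdset k)).trans_le (hφ k))

lemma two_mul_exp_neg_div_two_le {c a m : ℝ} (hc : 0 ≤ c) (ha : 0 < a) (ha1 : a ≤ 1) (hm : 0 ≤ m) :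
    2 * c * Real.exp (-m * a ^ 2 / 2)
      ≤ 2 * Real.sqrt 6 * c / a * Real.exp (-m * a ^ 2 / 4) := by
  have hexp : Real.exp (-m * a ^ 2 / 2) ≤ Real.exp (-m * a ^ 2 / 4) :=
    Real.exp_le_exp.2 (by nlinarith [mul_nonneg hm (sq_nonneg a)])
  have hsqrt : 1 ≤ Real.sqrt 6 / a :=
    (one_le_div ha).2 (ha1.trans (Real.one_le_sqrt.2 (by norm_num)))
  calc 2 * c * Real.exp (-m * a ^ 2 / 2) ≤ 2 * c * 1 * Real.exp (-m * a ^ 2 / 4) := by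
        rw [mul_one]
        gcongr
    _ ≤ 2 * c * (Real.sqrt 6 / a) * Real.exp (-m * a ^ 2 / 4) := by gcongr
    _ = 2 * Real.sqrt 6 * c / a * Real.exp (-m * a ^ 2 / 4) := by ring

theorem stmt_0_general {Ω : Type*} [MeasurableSpace Ω] (P : Measure Ω) [IsProbabilityMeasure P]
    (n M : ℕ) (hn : 1 ≤ n)
    (Y : Fin n → Ω → ℝ) (I : Fin n → Ω → ℕ) (Ihat : Fin n → Ω → ℕ)
    (hYmeas : ∀ k, Measurable (Y k)) (hImeas : ∀ k, Measurable (I k))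
    (hIhatmeas : ∀ k, Measurable (Ihat k))
    -- the pairs (Y_k, I_k) are i.i.d.
    (hindep : iIndepFun (fun k ω => (Y k ω, I k ω)) P)
    (hident : ∀ k : Fin n,
      Measure.map (fun ω => (Y k ω, I k ω)) P
        = Measure.map (fun ω => (Y ⟨0, hn⟩ ω, I ⟨0, hn⟩ ω)) P)
    -- mixture weights
    (α : ℕ → ℝ) (hα : ∀ i ∈ Finset.Icc 1 M, α i = (P {ω | I ⟨0, hn⟩ ω = i}).toReal)
    (hαpos : ∀ i ∈ Finset.Icc 1 M, 0 < α i)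
    -- conditional densities: P(Y₁ ∈ s, I₁ = i) = α_i ∫_s f_i
    (f : ℕ → ℝ → ℝ)
    (hf : ∀ i ∈ Finset.Icc 1 M, ∀ s : Set ℝ, MeasurableSet s →
      (P ({ω | I ⟨0, hn⟩ ω = i} ∩ (Y ⟨0, hn⟩) ⁻¹' s)).toReal = α i * ∫ t in s, f i t)
    -- kernel and bandwidth
    (K : ℝ → ℝ) (hKint : Integrable K)
    (h : ℝ) (hh : 0 < h)
    (Kh : ℝ → ℝ → ℝ) (hKh : ∀ t y, Kh t y = h⁻¹ * K ((t - y) / h))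
    -- counts of true and predicted labels
    (N Nhat : ℕ → Ω → ℕ)
    (hN : ∀ i ω, N i ω = (Finset.univ.filter fun k => I k ω = i).card)
    (hNhat : ∀ i ω, Nhat i ω = (Finset.univ.filter fun k => Ihat k ω = i).card)
    -- oracle and two-step kernel density estimates
    (fbar fhat : ℕ → Ω → ℝ → ℝ)
    (hfbar : ∀ i ω t, fbar i ω t =
      if N i ω = 0 then 0
      else (N i ω : ℝ)⁻¹ * ∑ k, Kh t (Y k ω) * (if I k ω = i then 1 else 0))
    (hfhat : ∀ i ω t, fhat i ω t =
      (Nhat i ω : ℝ)⁻¹ * ∑ k, Kh t (Y k ω) * (if Ihat k ω = i then 1 else 0))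
    -- maximal misclassification error
    (φ : ℝ)
    (hφ : φ = Finset.univ.sup' ⟨⟨0, hn⟩, Finset.mem_univ _⟩
      (fun k => (P {ω | Ihat k ω ≠ I k ω}).toReal))
    (i : ℕ) (hi : i ∈ Finset.Icc 1 M) :
    (∫ ω, (∫ t, |fhat i ω t - f i t|) ∂P)
      ≤ (∫ ω, (∫ t, |fbar i ω t - f i t|) ∂P)
        + 4 * (∫ t, |K t|) / α i * φ
        + 2 * Real.sqrt 6 * (∫ t, |K t|) / α i * Real.exp (-(n : ℝ) * (α i) ^ 2 / 4)
        + (∫ t, |K t|) * (1 - α i) ^ n := by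
  have : Nonempty (Fin n) := ⟨⟨0, hn⟩⟩
  have hIα : ∀ k, P.real (I k ⁻¹' {i}) = α i := fun k => by
    have hid : IdentDistrib (I k) (I ⟨0, hn⟩) P P :=
      (IdentDistrib.mk ((hYmeas k).prodMk (hImeas k)).aemeasurable
        ((hYmeas _).prodMk (hImeas _)).aemeasurable (hident k)).comp measurable_snd
    rw [measureReal_def, hid.measure_mem_eq (measurableSet_singleton i), hα i hi]
    rfl
  have hfint : Integrable (f i) := Integrable.of_integral_ne_zero fun h0 => by
    have hfi := hf i hi Set.univ MeasurableSet.univ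
    rw [setIntegral_univ, h0, mul_zero, Set.preimage_univ, Set.inter_univ, ← hα i hi] at hfi
    exact (hαpos i hi).ne' hfi
  have key := integral_integral_abs_kernelSum_labelWeights_sub_le
    (integrable_inv_mul_comp_div hKint h) hfint hYmeas hImeas (fun k => (measurableSet_eq_fun (hIhatmeas k) (hImeas k)).compl)
    (hindep.comp (fun _ p => p.2) fun _ => measurable_snd)
    (hαpos i hi) hIα (φ := φ) fun k => by
      rw [hφ]
      exact Finset.le_sup' (fun k => (P {ω | Ihat k ω ≠ I k ω}).toReal) (Finset.mem_univ k)
  rw [integral_abs_inv_mul_comp_div K hh, Fintype.card_fin] at key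
  have hfhat' : ∀ ω, fhat i ω = kernelSum (fun u => h⁻¹ * K (u / h))
      (labelWeights (Ihat · ω) i) (Y · ω) := fun ω => funext fun t => by
    rw [hfhat, hNhat, inv_card_filter_mul_sum_eq_kernelSum (g := fun u => h⁻¹ * K (u / h)) hKh]
  -- if `N i ω = 0`, the oracle weights are `0 / 0 = 0`, matching `fbar i ω = 0`
  have hfbar' : ∀ ω, fbar i ω = kernelSum (fun u => h⁻¹ * K (u / h))
      (labelWeights (I · ω) i) (Y · ω) := fun ω => funext fun t => by
    rw [hfbar, hN, inv_card_filter_mul_sum_eq_kernelSum (g := fun u => h⁻¹ * K (u / h)) hKh]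
    split_ifs with h0 <;> simp [h0, kernelSum, labelWeights]
  simp only [hfhat', hfbar']
  have hα1 : α i ≤ 1 := hα i hi ▸ measureReal_le_one
  have hc : 0 ≤ ∫ t, |K t| := integral_nonneg fun t => abs_nonneg _
  linarith [two_mul_exp_neg_div_two_le hc (hαpos i hi) hα1 (Nat.cast_nonneg n),
    mul_nonneg hc (pow_nonneg (sub_nonneg.2 hα1) n)]

/-- Theorem 1, inequality (1): for each mixture component `i`, the expected `L¹`-error of
the two-step estimate `f̂_i` (built from predicted labels `Î_k`) is bounded by the expected
`L¹`-error of the oracle kernel estimate `f̄_i` (built from the true labels `I_k`) plus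
`(4‖K‖₁/α_i) φ_n + (2√6 ‖K‖₁/α_i) exp(−n α_i²/4) + ‖K‖₁ (1−α_i)^n`, where
`φ_n = max_k P(Î_k ≠ I_k)` is the maximal misclassification error. -/
theorem stmt_0 {Ω : Type*} [MeasurableSpace Ω] (P : Measure Ω) [IsProbabilityMeasure P]
    (n M : ℕ) (hn : 1 ≤ n) (hM : 2 ≤ M)
    (Y : Fin n → Ω → ℝ) (I : Fin n → Ω → ℕ) (Ihat : Fin n → Ω → ℕ)
    (hYmeas : ∀ k, Measurable (Y k)) (hImeas : ∀ k, Measurable (I k))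
    (hIhatmeas : ∀ k, Measurable (Ihat k))
    (hIrange : ∀ k ω, I k ω ∈ Finset.Icc 1 M)
    (hIhatrange : ∀ k ω, Ihat k ω ∈ Finset.Icc 0 M)
    -- the pairs (Y_k, I_k) are i.i.d.
    (hindep : iIndepFun (fun k ω => (Y k ω, I k ω)) P)
    (hident : ∀ k : Fin n,
      Measure.map (fun ω => (Y k ω, I k ω)) P
        = Measure.map (fun ω => (Y ⟨0, hn⟩ ω, I ⟨0, hn⟩ ω)) P)
    -- mixture weights
    (α : ℕ → ℝ) (hα : ∀ i ∈ Finset.Icc 1 M, α i = (P {ω | I ⟨0, hn⟩ ω = i}).toReal)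
    (hαpos : ∀ i ∈ Finset.Icc 1 M, 0 < α i)
    -- conditional densities: P(Y₁ ∈ s, I₁ = i) = α_i ∫_s f_i
    (f : ℕ → ℝ → ℝ)
    (hf : ∀ i ∈ Finset.Icc 1 M, ∀ s : Set ℝ, MeasurableSet s →
      (P ({ω | I ⟨0, hn⟩ ω = i} ∩ (Y ⟨0, hn⟩) ⁻¹' s)).toReal = α i * ∫ t in s, f i t)
    -- kernel and bandwidth
    (K : ℝ → ℝ) (hKint : Integrable K) (hK1 : (∫ t, K t) = 1)
    (h : ℝ) (hh : 0 < h)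
    (Kh : ℝ → ℝ → ℝ) (hKh : ∀ t y, Kh t y = h⁻¹ * K ((t - y) / h))
    -- counts of true and predicted labels
    (N Nhat : ℕ → Ω → ℕ)
    (hN : ∀ i ω, N i ω = (Finset.univ.filter fun k => I k ω = i).card)
    (hNhat : ∀ i ω, Nhat i ω = (Finset.univ.filter fun k => Ihat k ω = i).card)
    (hNhatpos : ∀ i ∈ Finset.Icc 1 M, ∀ᵐ ω ∂P, 1 ≤ Nhat i ω)
    -- oracle and two-step kernel density estimates
    (fbar fhat : ℕ → Ω → ℝ → ℝ)
    (hfbar : ∀ i ω t, fbar i ω t =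
      if N i ω = 0 then 0
      else (N i ω : ℝ)⁻¹ * ∑ k, Kh t (Y k ω) * (if I k ω = i then 1 else 0))
    (hfhat : ∀ i ω t, fhat i ω t =
      (Nhat i ω : ℝ)⁻¹ * ∑ k, Kh t (Y k ω) * (if Ihat k ω = i then 1 else 0))
    -- maximal misclassification error
    (φ : ℝ)
    (hφ : φ = Finset.univ.sup' ⟨⟨0, hn⟩, Finset.mem_univ _⟩
      (fun k => (P {ω | Ihat k ω ≠ I k ω}).toReal))
    (i : ℕ) (hi : i ∈ Finset.Icc 1 M) :
    (∫ ω, (∫ t, |fhat i ω t - f i t|) ∂P)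
      ≤ (∫ ω, (∫ t, |fbar i ω t - f i t|) ∂P)
        + 4 * (∫ t, |K t|) / α i * φ
        + 2 * Real.sqrt 6 * (∫ t, |K t|) / α i * Real.exp (-(n : ℝ) * (α i) ^ 2 / 4)
        + (∫ t, |K t|) * (1 - α i) ^ n :=
  stmt_0_general P n M hn Y I Ihat hYmeas hImeas hIhatmeas hindep hident α hα hαpos f hf K hKint h
    hh Kh hKh N Nhat hN hNhat fbar fhat hfbar hfhat φ hφ i hi
end

section
/- For every i ∈ {1,…,M} and every n ≥ 1, the estimated mixture weight α̂_i = N̂_i/n satisfies E|α̂_i − α_i| ≤ φ_n + √(α_i(1−α_i)/n). -/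
/-!
Write `α̂_i − α_i` as the difference between the frequencies of label `i` among the predicted
and among the true labels, plus the deviation of the true-label frequency from `α_i`. The first
term is at most the fraction of misclassified samples, whose expectation is at most `φ_n`. The
second is the centred average of `n` independent Bernoulli(`α_i`) indicators; its variance is
`α_i(1−α_i)/n`, and its `L¹` norm is bounded by its `L²` norm.
-/

open MeasureTheory ProbabilityTheory Finset

lemma memLp_indicator_one {Ω : Type*} [MeasurableSpace Ω] {P : Measure Ω} [IsFiniteMeasure P]
    {s : Set Ω} (hs : MeasurableSet s) (p : ENNReal) :
    MemLp (s.indicator (1 : Ω → ℝ)) p P :=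
  memLp_indicator_const p hs 1 (Or.inr (measure_ne_top P s))

section Moments

variable {Ω : Type*} [MeasurableSpace Ω] {P : Measure Ω} [IsProbabilityMeasure P]

lemma integral_abs_le_sqrt_integral_sq {Z : Ω → ℝ} (hZ : MemLp Z 2 P) :
    ∫ ω, |Z ω| ∂P ≤ √(∫ ω, Z ω ^ 2 ∂P) := by
  refine Real.le_sqrt_of_sq_le ?_
  have h := variance_nonneg |Z| P
  rw [variance_eq_sub hZ.abs] at h
  simpa [sq_abs] using h

lemma integral_abs_sub_integral_le_sqrt_variance {X : Ω → ℝ} (hX : MemLp X 2 P) :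
    ∫ ω, |X ω - P[X]| ∂P ≤ √(variance X P) := by
  rw [variance_eq_integral hX.aemeasurable]
  exact integral_abs_le_sqrt_integral_sq (hX.sub (memLp_const _))

lemma integral_abs_sum_div_card_sub_le_sqrt {ι : Type*} [Fintype ι] [Nonempty ι]
    {X : ι → Ω → ℝ} {m v : ℝ} (hX : ∀ k, MemLp (X k) 2 P)
    (hindep : Pairwise fun k l => IndepFun (X k) (X l) P)
    (hmean : ∀ k, P[X k] = m) (hvar : ∀ k, variance (X k) P = v) :
    ∫ ω, |(∑ k, X k ω) / Fintype.card ι - m| ∂P ≤ √(v / Fintype.card ι) := by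
  have hN : (Fintype.card ι : ℝ) ≠ 0 := Nat.cast_ne_zero.mpr Fintype.card_ne_zero
  have hsum : MemLp (∑ k, X k) 2 P := memLp_finsetSum' _ fun k _ => hX k
  have hA : MemLp (fun ω => (Fintype.card ι : ℝ)⁻¹ * (∑ k, X k) ω) 2 P := hsum.const_mul _
  have hmeanA : P[fun ω => (Fintype.card ι : ℝ)⁻¹ * (∑ k, X k) ω] = m := by
    simp only [integral_const_mul, Finset.sum_apply]
    rw [integral_finsetSum _ fun k _ => (hX k).integrable one_le_two]
    simp only [hmean, sum_const, card_univ, nsmul_eq_mul]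
    field_simp
  have hvarA : variance (fun ω => (Fintype.card ι : ℝ)⁻¹ * (∑ k, X k) ω) P
      = v / Fintype.card ι := by
    rw [variance_const_mul, IndepFun.variance_sum (fun k _ => hX k)
      (fun k _ l _ hkl => hindep hkl)]
    simp only [hvar, sum_const, card_univ, nsmul_eq_mul]
    field_simp
  have h := integral_abs_sub_integral_le_sqrt_variance hA
  rw [hmeanA, hvarA] at h
  simpa [div_eq_inv_mul] using h

lemma variance_indicator_one {s : Set Ω} (hs : MeasurableSet s) :
    variance (s.indicator (1 : Ω → ℝ)) P = P.real s * (1 - P.real s) := by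
  have hsq : s.indicator (1 : Ω → ℝ) ^ 2 = s.indicator 1 := by
    ext ω
    by_cases h : ω ∈ s <;> simp [h]
  rw [variance_eq_sub (memLp_indicator_one hs 2), hsq, integral_indicator_one hs]
  ring

end Moments

lemma card_filter_eq_le_card_filter_eq_add_card_filter_ne {ι β : Type*} [Fintype ι]
    [DecidableEq β] (a b : ι → β) (i : β) :
    #{k | a k = i} ≤ #{k | b k = i} + #{k | a k ≠ b k} := by
  classical
  refine (card_le_card fun k hk => ?_).trans (card_union_le _ _)
  by_cases h : a k = b k <;> simp_all

lemma abs_card_filter_eq_sub_card_filter_eq_le {ι β : Type*} [Fintype ι] [DecidableEq β]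
    (a b : ι → β) (i : β) :
    |(#{k | a k = i} : ℝ) - #{k | b k = i}| ≤ #{k | a k ≠ b k} := by
  have hab : (#{k | a k = i} : ℝ) ≤ #{k | b k = i} + #{k | a k ≠ b k} := by
    exact_mod_cast card_filter_eq_le_card_filter_eq_add_card_filter_ne a b i
  have hba : (#{k | b k = i} : ℝ) ≤ #{k | a k = i} + #{k | a k ≠ b k} := by
    simpa only [ne_comm, Nat.cast_add] using
      (Nat.cast_le (α := ℝ)).mpr (card_filter_eq_le_card_filter_eq_add_card_filter_ne b a i)
  rw [abs_sub_le_iff]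
  constructor <;> linarith

section Counting

variable {Ω ι : Type*} [Fintype ι] {p : ι → Ω → Prop}
  [∀ k ω, Decidable (p k ω)]

lemma natCast_card_filter_eq_sum_indicator (ω : Ω) :
    (#{k | p k ω} : ℝ) = ∑ k, {ω | p k ω}.indicator 1 ω := by
  simp [Set.indicator_apply]

variable [MeasurableSpace Ω] {P : Measure Ω} [IsFiniteMeasure P]

lemma integrable_card_filter (hp : ∀ k, MeasurableSet {ω | p k ω}) :
    Integrable (fun ω => (#{k | p k ω} : ℝ)) P := by
  simp_rw [natCast_card_filter_eq_sum_indicator]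
  exact integrable_finsetSum _ fun k _ => (integrable_const 1).indicator (hp k)

lemma integral_card_filter (hp : ∀ k, MeasurableSet {ω | p k ω}) :
    ∫ ω, (#{k | p k ω} : ℝ) ∂P = ∑ k, P.real {ω | p k ω} := by
  simp_rw [natCast_card_filter_eq_sum_indicator]
  rw [integral_finsetSum _ fun k _ => (integrable_const 1).indicator (hp k)]
  simp_rw [integral_indicator_one (hp _)]

end Counting

section Frequency

variable {ι β : Type*} [Fintype ι] [DecidableEq β]

noncomputable def labelFreq (L : ι → β) (i : β) : ℝ := #{k | L k = i} / Fintype.card ι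

lemma abs_labelFreq_sub_labelFreq_le (a b : ι → β) (i : β) :
    |labelFreq a i - labelFreq b i| ≤ #{k | a k ≠ b k} / Fintype.card ι := by
  rw [labelFreq, labelFreq, ← sub_div, abs_div, Nat.abs_cast]
  gcongr
  exact abs_card_filter_eq_sub_card_filter_eq_le a b i

variable {Ω : Type*} [MeasurableSpace Ω] {P : Measure Ω} [IsProbabilityMeasure P]

lemma integral_abs_labelFreq_sub_le {a b : ι → Ω → β} {i : β} (c : ℝ)
    (hab : ∀ k, MeasurableSet {ω | a k ω ≠ b k ω}) (hb : ∀ k, MeasurableSet {ω | b k ω = i}) :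
    ∫ ω, |labelFreq (a · ω) i - c| ∂P
      ≤ (∑ k, P.real {ω | a k ω ≠ b k ω}) / Fintype.card ι
        + ∫ ω, |labelFreq (b · ω) i - c| ∂P := by
  have hmismatch := (integrable_card_filter (P := P) hab).div_const (Fintype.card ι : ℝ)
  have hfreq : Integrable (fun ω => |labelFreq (b · ω) i - c|) P :=
    (((integrable_card_filter hb).div_const _).sub (integrable_const c)).abs
  calc ∫ ω, |labelFreq (a · ω) i - c| ∂P
      ≤ ∫ ω, ((#{k | a k ω ≠ b k ω} : ℝ) / Fintype.card ι + |labelFreq (b · ω) i - c|) ∂P := by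
        refine integral_mono_of_nonneg (ae_of_all _ fun _ => abs_nonneg _)
          (hmismatch.add hfreq) (ae_of_all _ fun ω => ?_)
        calc |labelFreq (a · ω) i - c|
            ≤ |labelFreq (a · ω) i - labelFreq (b · ω) i| + |labelFreq (b · ω) i - c| :=
              abs_sub_le _ _ _
          _ ≤ _ := add_le_add (abs_labelFreq_sub_labelFreq_le _ _ i) le_rfl
    _ = _ := by rw [integral_add hmismatch hfreq, integral_div, integral_card_filter hab]

lemma integral_abs_labelFreq_sub_le_sqrt [Nonempty ι] [MeasurableSpace β]
    [MeasurableSingletonClass β] {L : ι → Ω → β} (hL : ∀ k, Measurable (L k))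
    (hindep : Pairwise fun k l => IndepFun (L k) (L l) P) {i : β} {p : ℝ}
    (hp : ∀ k, P.real (L k ⁻¹' {i}) = p) :
    ∫ ω, |labelFreq (L · ω) i - p| ∂P ≤ √(p * (1 - p) / Fintype.card ι) := by
  have hset : ∀ k, MeasurableSet {ω | L k ω = i} := fun k => hL k (measurableSet_singleton i)
  have hind : Measurable (({i} : Set β).indicator (1 : β → ℝ)) :=
    measurable_one.indicator (measurableSet_singleton i)
  have hsum : ∀ ω, (#{k | L k ω = i} : ℝ) = ∑ k, {ω | L k ω = i}.indicator 1 ω :=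
    natCast_card_filter_eq_sum_indicator (p := fun k ω => L k ω = i)
  simpa only [labelFreq, hsum] using
    integral_abs_sum_div_card_sub_le_sqrt (fun k => memLp_indicator_one (hset k) 2)
      (fun k l hkl => by exact (hindep hkl).comp hind hind)
      (fun k => by rw [integral_indicator_one (hset k), ← hp k]; rfl)
      (fun k => by rw [variance_indicator_one (hset k), ← hp k]; rfl)

end Frequency

theorem stmt_1_general {Ω : Type*} [MeasurableSpace Ω] (P : Measure Ω) [IsProbabilityMeasure P]
    (n M : ℕ) (hn : 1 ≤ n)
    (Y : Fin n → Ω → ℝ) (I : Fin n → Ω → ℕ) (Ihat : Fin n → Ω → ℕ)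
    (hYmeas : ∀ k, Measurable (Y k)) (hImeas : ∀ k, Measurable (I k))
    (hIhatmeas : ∀ k, Measurable (Ihat k))
    -- the pairs (Y_k, I_k) are i.i.d.
    (hindep : iIndepFun (fun k ω => (Y k ω, I k ω)) P)
    (hident : ∀ k : Fin n,
      Measure.map (fun ω => (Y k ω, I k ω)) P
        = Measure.map (fun ω => (Y ⟨0, hn⟩ ω, I ⟨0, hn⟩ ω)) P)
    -- mixture weights
    (α : ℕ → ℝ) (hα : ∀ i ∈ Finset.Icc 1 M, α i = (P {ω | I ⟨0, hn⟩ ω = i}).toReal)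
    -- counts of predicted labels and estimated weights
    (Nhat : ℕ → Ω → ℕ)
    (hNhat : ∀ i ω, Nhat i ω = (Finset.univ.filter fun k => Ihat k ω = i).card)
    (αhat : ℕ → Ω → ℝ) (hαhat : ∀ i ω, αhat i ω = (Nhat i ω : ℝ) / n)
    -- maximal misclassification error
    (φ : ℝ)
    (hφ : φ = Finset.univ.sup' ⟨⟨0, hn⟩, Finset.mem_univ _⟩
      (fun k => (P {ω | Ihat k ω ≠ I k ω}).toReal))
    (i : ℕ) (hi : i ∈ Finset.Icc 1 M) :
    (∫ ω, |αhat i ω - α i| ∂P) ≤ φ + Real.sqrt (α i * (1 - α i) / n) := by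
  have : Nonempty (Fin n) := ⟨⟨0, hn⟩⟩
  have hαhat_eq : ∀ ω, αhat i ω = labelFreq (Ihat · ω) i := fun ω => by
    rw [hαhat, hNhat, labelFreq, Fintype.card_fin]
  have hpair : ∀ k, AEMeasurable (fun ω => (Y k ω, I k ω)) P :=
    fun k => ((hYmeas k).prodMk (hImeas k)).aemeasurable
  have hweight : ∀ k, P.real (I k ⁻¹' {i}) = α i := fun k => by
    rw [hα i hi, measureReal_def]
    exact congrArg ENNReal.toReal <|
      (IdentDistrib.comp ⟨hpair k, hpair _, hident k⟩ measurable_snd).measure_mem_eq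
        (measurableSet_singleton i)
  have hsample := integral_abs_labelFreq_sub_le_sqrt hImeas
    (fun k l hkl => by
      exact (hindep.comp (fun _ => Prod.snd) fun _ => measurable_snd).indepFun hkl)
    hweight
  have herror : ∑ k, P.real {ω | Ihat k ω ≠ I k ω} ≤ n * φ := by
    calc ∑ k, P.real {ω | Ihat k ω ≠ I k ω} ≤ ∑ _k : Fin n, φ := sum_le_sum fun k _ => by
          rw [hφ, measureReal_def]
          exact le_sup' (fun k => (P {ω | Ihat k ω ≠ I k ω}).toReal) (mem_univ k)
      _ = n * φ := by simp
  have hn₀ : (0 : ℝ) < n := by exact_mod_cast hn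
  simp_rw [hαhat_eq]
  refine (integral_abs_labelFreq_sub_le (α i)
    (fun k => (measurableSet_eq_fun (hIhatmeas k) (hImeas k)).compl)
    (fun k => hImeas k (measurableSet_singleton i))).trans ?_
  rw [Fintype.card_fin] at hsample ⊢
  gcongr
  rwa [div_le_iff₀ hn₀, mul_comm]

/-- Theorem 1, inequality (2): the estimated mixture weight `α̂_i = N̂_i/n` satisfies
`E|α̂_i − α_i| ≤ φ_n + √(α_i(1−α_i)/n)`, where `φ_n = max_k P(Î_k ≠ I_k)`. -/
theorem stmt_1 {Ω : Type*} [MeasurableSpace Ω] (P : Measure Ω) [IsProbabilityMeasure P]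
    (n M : ℕ) (hn : 1 ≤ n) (hM : 2 ≤ M)
    (Y : Fin n → Ω → ℝ) (I : Fin n → Ω → ℕ) (Ihat : Fin n → Ω → ℕ)
    (hYmeas : ∀ k, Measurable (Y k)) (hImeas : ∀ k, Measurable (I k))
    (hIhatmeas : ∀ k, Measurable (Ihat k))
    (hIrange : ∀ k ω, I k ω ∈ Finset.Icc 1 M)
    (hIhatrange : ∀ k ω, Ihat k ω ∈ Finset.Icc 0 M)
    -- the pairs (Y_k, I_k) are i.i.d.
    (hindep : iIndepFun (fun k ω => (Y k ω, I k ω)) P)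
    (hident : ∀ k : Fin n,
      Measure.map (fun ω => (Y k ω, I k ω)) P
        = Measure.map (fun ω => (Y ⟨0, hn⟩ ω, I ⟨0, hn⟩ ω)) P)
    -- mixture weights
    (α : ℕ → ℝ) (hα : ∀ i ∈ Finset.Icc 1 M, α i = (P {ω | I ⟨0, hn⟩ ω = i}).toReal)
    (hαpos : ∀ i ∈ Finset.Icc 1 M, 0 < α i)
    -- counts of predicted labels and estimated weights
    (Nhat : ℕ → Ω → ℕ)
    (hNhat : ∀ i ω, Nhat i ω = (Finset.univ.filter fun k => Ihat k ω = i).card)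
    (αhat : ℕ → Ω → ℝ) (hαhat : ∀ i ω, αhat i ω = (Nhat i ω : ℝ) / n)
    -- maximal misclassification error
    (φ : ℝ)
    (hφ : φ = Finset.univ.sup' ⟨⟨0, hn⟩, Finset.mem_univ _⟩
      (fun k => (P {ω | Ihat k ω ≠ I k ω}).toReal))
    (i : ℕ) (hi : i ∈ Finset.Icc 1 M) :
    (∫ ω, |αhat i ω - α i| ∂P) ≤ φ + Real.sqrt (α i * (1 - α i) / n) :=
  stmt_1_general P n M hn Y I Ihat hYmeas hImeas hIhatmeas hindep hident α hα Nhat hNhat αhat hαhat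
    φ hφ i hi
end

section
/- For every integer n ≥ 2 and every k ∈ {1,…,n}, the misclassification probability of the plug-in rule satisfies P(Î_k ≠ I_k) ≤ λ + 1/n + (2/α₂)·(log n)/n; consequently the maximal misclassification error φ_n = max_{1≤k≤n} P(Î_k ≠ I_k) is bounded by λ + 1/n + (2/α₂)·(log n)/n. -/
/-!
Misclassifying observation `k` forces one of three events: a label-2 point lies in the overlap
`[1 - λ, 1)` (probability `α₂λ`), a label-1 point lies above `1 - (λ + δ)` (probability at most
`α₁(λ + δ)`), or every sample lies below `2 - (λ + δ)`, i.e. `λ̂` overshoots `λ + δ`. By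
independence the last event has probability at most `(1 - α₂δ)ⁿ ≤ exp (-nα₂δ)`, which is `1/n²`
for `δ = (2/α₂)(log n)/n`.
-/

open MeasureTheory ProbabilityTheory Set

lemma setIntegral_indicator_Icc_one (s : Set ℝ) (a b : ℝ) :
    ∫ t in s, (Icc a b).indicator (fun _ => (1 : ℝ)) t = volume.real (Icc a b ∩ s) := by
  rw [integral_indicator_const _ measurableSet_Icc, measureReal_restrict_apply measurableSet_Icc,
    smul_eq_mul, mul_one]

section UniformComponent

variable {Ω : Type*} [MeasurableSpace Ω] {P : Measure Ω} {E : Set Ω} {X : Ω → ℝ} {α a b : ℝ}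
  {s : Set ℝ} {u v : ℝ}

lemma measureReal_inter_preimage_le
    (hg : ∀ s, MeasurableSet s →
      P.real (E ∩ X ⁻¹' s) = α * ∫ t in s, (Icc a b).indicator (fun _ => (1 : ℝ)) t)
    (hα : 0 ≤ α) (hs : MeasurableSet s) (huv : u ≤ v) (hsub : Icc a b ∩ s ⊆ Icc u v) :
    P.real (E ∩ X ⁻¹' s) ≤ α * (v - u) := by
  rw [hg s hs, setIntegral_indicator_Icc_one, ← Real.volume_real_Icc_of_le huv]
  gcongr
  exact measure_Icc_lt_top.ne

lemma le_measureReal_inter_preimage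
    (hg : ∀ s, MeasurableSet s →
      P.real (E ∩ X ⁻¹' s) = α * ∫ t in s, (Icc a b).indicator (fun _ => (1 : ℝ)) t)
    (hα : 0 ≤ α) (hs : MeasurableSet s) (hsub : Icc u v ⊆ Icc a b ∩ s) :
    α * (v - u) ≤ P.real (E ∩ X ⁻¹' s) := by
  rw [hg s hs, setIntegral_indicator_Icc_one]
  calc α * (v - u) ≤ α * volume.real (Icc u v) := by
        rw [Real.volume_real_Icc]; gcongr; exact le_max_left _ _
    _ ≤ α * volume.real (Icc a b ∩ s) := by
        gcongr
        exact ((measure_mono inter_subset_left).trans_lt measure_Icc_lt_top).ne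

end UniformComponent

lemma measureReal_eq_add_measureReal_eq_le_one {Ω β : Type*} [MeasurableSpace Ω]
    [MeasurableSpace β] [MeasurableSingletonClass β] {P : Measure Ω} [IsProbabilityMeasure P]
    {f : Ω → β} (hf : Measurable f) {i j : β} (hij : i ≠ j) :
    P.real {ω | f ω = i} + P.real {ω | f ω = j} ≤ 1 := by
  have hdisj : Disjoint {ω | f ω = i} {ω | f ω = j} :=
    disjoint_left.2 fun ω (hi : f ω = i) (hj : f ω = j) => hij (hi.symm.trans hj)
  rw [← measureReal_union hdisj (hf (measurableSet_singleton j))]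
  exact measureReal_le_one

lemma ProbabilityTheory.IdentDistrib.measureReal_mem_eq {Ω Ω' β : Type*} [MeasurableSpace Ω]
    [MeasurableSpace Ω'] [MeasurableSpace β] {P : Measure Ω} {Q : Measure Ω'} {f : Ω → β}
    {g : Ω' → β} (h : IdentDistrib f g P Q) {s : Set β} (hs : MeasurableSet s) :
    P.real (f ⁻¹' s) = Q.real (g ⁻¹' s) :=
  congrArg ENNReal.toReal (h.measure_mem_eq hs)

lemma ProbabilityTheory.iIndepFun.measureReal_forall_mem_eq_pow {Ω ι β : Type*}
    [MeasurableSpace Ω] [Fintype ι] [MeasurableSpace β] {P : Measure Ω} {Y : ι → Ω → β}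
    {Z : Ω → β} (hindep : iIndepFun Y P) (hident : ∀ i, IdentDistrib (Y i) Z P P) {S : Set β}
    (hS : MeasurableSet S) :
    P.real {ω | ∀ i, Y i ω ∈ S} = P.real (Z ⁻¹' S) ^ Fintype.card ι := by
  have h := hindep.measure_inter_preimage_eq_mul Finset.univ (sets := fun _ => S) fun _ _ => hS
  simp only [(hident _).measure_mem_eq hS, Finset.prod_const, Finset.card_univ] at h
  rw [measureReal_def, measureReal_def, ← ENNReal.toReal_pow, ← h]
  congr 2
  ext ω
  simp

lemma pow_le_one_div_of_le_one_sub_two_log_div {n : ℕ} (hn : 0 < n) {p : ℝ} (hp0 : 0 ≤ p)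
    (hp : p ≤ 1 - 2 * Real.log n / n) : p ^ n ≤ 1 / n := by
  have hn' : (0 : ℝ) < n := by exact_mod_cast hn
  calc p ^ n ≤ Real.exp (-(2 * Real.log n / n)) ^ n :=
        pow_le_pow_left₀ hp0 (hp.trans (Real.one_sub_le_exp_neg _)) n
    _ = 1 / n ^ 2 := by
        rw [← Real.exp_nat_mul, mul_neg, mul_div_cancel₀ _ hn'.ne', Real.exp_neg,
          show 2 * Real.log n = Real.log (n ^ 2) by rw [Real.log_pow]; norm_num,
          Real.exp_log (by positivity), one_div]
    _ ≤ 1 / n := by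
        gcongr
        exact le_self_pow₀ (by exact_mod_cast hn) two_ne_zero

lemma ProbabilityTheory.iIndepFun.measureReal_forall_mem_le_one_div {Ω β : Type*}
    [MeasurableSpace Ω] [MeasurableSpace β] {P : Measure Ω} {n : ℕ} (hn : 0 < n)
    {Y : Fin n → Ω → β} {Z : Ω → β} (hindep : iIndepFun Y P)
    (hident : ∀ i, IdentDistrib (Y i) Z P P) {S : Set β} (hS : MeasurableSet S)
    (hZS : P.real (Z ⁻¹' S) ≤ 1 - 2 * Real.log n / n) :
    P.real {ω | ∀ i, Y i ω ∈ S} ≤ 1 / n := by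
  rw [hindep.measureReal_forall_mem_eq_pow hident hS, Fintype.card_fin]
  exact pow_le_one_div_of_le_one_sub_two_log_div hn measureReal_nonneg hZS

section UniformMixture

variable {Ω : Type*} [MeasurableSpace Ω] {P : Measure Ω} {X : Ω → ℝ} {I : Ω → ℕ} {α₁ α₂ lam : ℝ}

lemma measureReal_label_two_lt_one_le
    (hg2 : ∀ s, MeasurableSet s → P.real ({ω | I ω = 2} ∩ X ⁻¹' s)
      = α₂ * ∫ t in s, (Icc (1 - lam) (2 - lam)).indicator (fun _ => (1 : ℝ)) t)
    (hα₂ : 0 ≤ α₂) (hlam : 0 ≤ lam) :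
    P.real {ω | I ω = 2 ∧ X ω < 1} ≤ α₂ * lam :=
  (measureReal_inter_preimage_le hg2 hα₂ measurableSet_Iio (u := 1 - lam) (v := 1)
    (by linarith) fun _ hx => ⟨hx.1.1, hx.2.le⟩).trans_eq (by ring)

lemma measureReal_label_one_gt_le
    (hg1 : ∀ s, MeasurableSet s → P.real ({ω | I ω = 1} ∩ X ⁻¹' s)
      = α₁ * ∫ t in s, (Icc (0 : ℝ) 1).indicator (fun _ => (1 : ℝ)) t)
    (hα₁ : 0 ≤ α₁) {s : ℝ} (hs : 0 ≤ s) :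
    P.real {ω | I ω = 1 ∧ 1 - s < X ω} ≤ α₁ * s :=
  (measureReal_inter_preimage_le hg1 hα₁ measurableSet_Ioi (u := 1 - s) (v := 1)
    (by linarith) fun _ hx => ⟨hx.2.le, hx.1.2⟩).trans_eq (by ring)

lemma measureReal_lt_two_sub_le [IsProbabilityMeasure P] (hX : Measurable X)
    (hg2 : ∀ s, MeasurableSet s → P.real ({ω | I ω = 2} ∩ X ⁻¹' s)
      = α₂ * ∫ t in s, (Icc (1 - lam) (2 - lam)).indicator (fun _ => (1 : ℝ)) t)
    (hα₂ : 0 ≤ α₂) {d : ℝ} (hd : d ≤ 1) :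
    P.real {ω | X ω < 2 - (lam + d)} ≤ 1 - α₂ * d := by
  have hlow : α₂ * d ≤ P.real ({ω | I ω = 2} ∩ X ⁻¹' Ici (2 - (lam + d))) :=
    (le_measureReal_inter_preimage hg2 hα₂ measurableSet_Ici (u := 2 - (lam + d))
      (v := 2 - lam) fun x hx => ⟨⟨by linarith [hx.1], hx.2⟩, hx.1⟩).trans_eq' (by ring)
  have hmono : P.real ({ω | I ω = 2} ∩ X ⁻¹' Ici (2 - (lam + d)))
      ≤ P.real (X ⁻¹' Ici (2 - (lam + d))) := measureReal_mono inter_subset_right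
  have hcompl : {ω | X ω < 2 - (lam + d)} = (X ⁻¹' Ici (2 - (lam + d)))ᶜ := by
    ext; exact (not_le (α := ℝ)).symm
  rw [hcompl, probReal_compl_eq_one_sub (hX measurableSet_Ici)]
  linarith

end UniformMixture

lemma misclassified_cases {x l s : ℝ} {i : ℕ} (hi : i = 1 ∨ i = 2) (hs : 0 < s)
    (h : (if 1 ≤ x then 2 else if x ≤ 1 - l then 1 else 0) ≠ i) :
    (i = 2 ∧ x < 1) ∨ (i = 1 ∧ 1 - s < x) ∨ s < l := by
  rcases hi with rfl | rfl
  · by_cases hls : l ≤ s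
    · refine Or.inr (Or.inl ⟨rfl, ?_⟩)
      split_ifs at h <;> [linarith; exact absurd rfl h; linarith]
    · exact Or.inr (Or.inr (not_le.1 hls))
  · split_ifs at h with h1
    · exact absurd rfl h
    all_goals exact Or.inl ⟨rfl, not_le.1 h1⟩

lemma misclassified_subset {Ω ι : Type*} [Fintype ι] {X : ι → Ω → ℝ} {I Ihat : ι → Ω → ℕ}
    {lamhat : Ω → ℝ} (hne : (Finset.univ : Finset ι).Nonempty)
    (hIrange : ∀ k ω, I k ω = 1 ∨ I k ω = 2)
    (hlamhat : ∀ ω, lamhat ω = 2 - Finset.univ.sup' hne (fun k => X k ω))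
    (hIhat : ∀ k ω, Ihat k ω = if 1 ≤ X k ω then 2 else if X k ω ≤ 1 - lamhat ω then 1 else 0)
    {s : ℝ} (hs : 0 < s) (k : ι) :
    {ω | Ihat k ω ≠ I k ω} ⊆ {ω | I k ω = 2 ∧ X k ω < 1} ∪ {ω | I k ω = 1 ∧ 1 - s < X k ω}
      ∪ {ω | ∀ j, X j ω < 2 - s} := by
  intro ω hω
  change Ihat k ω ≠ I k ω at hω
  rw [hIhat] at hω
  rcases misclassified_cases (hIrange k ω) hs hω with h | h | h
  · exact Or.inl (Or.inl h)
  · exact Or.inl (Or.inr h)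
  · refine Or.inr fun j => ?_
    have := Finset.le_sup' (fun k => X k ω) (Finset.mem_univ j)
    linarith [hlamhat ω]

/-- Proposition 1: for the two-component uniform mixture with overlap `λ` and the plug-in
classification rule based on `λ̂ = 2 − max_k X_k`, every `k` satisfies
`P(Î_k ≠ I_k) ≤ λ + 1/n + (2/α₂)(log n)/n`; consequently the maximal misclassification
error `φ_n = max_k P(Î_k ≠ I_k)` satisfies the same bound. -/
theorem stmt_3 {Ω : Type*} [MeasurableSpace Ω] (P : Measure Ω) [IsProbabilityMeasure P]
    (n : ℕ) (hn : 2 ≤ n) (lam : ℝ) (hlam : lam ∈ Set.Ioo (0 : ℝ) 1)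
    (X : Fin n → Ω → ℝ) (I : Fin n → Ω → ℕ)
    (hXmeas : ∀ k, Measurable (X k)) (hImeas : ∀ k, Measurable (I k))
    (hIrange : ∀ k ω, I k ω = 1 ∨ I k ω = 2)
    -- the pairs (X_k, I_k) are i.i.d.
    (hindep : iIndepFun (fun k ω => (X k ω, I k ω)) P)
    (hident : ∀ k : Fin n,
      Measure.map (fun ω => (X k ω, I k ω)) P
        = Measure.map (fun ω => (X ⟨0, by omega⟩ ω, I ⟨0, by omega⟩ ω)) P)
    -- mixture weights
    (α : ℕ → ℝ) (hα : ∀ i, α i = (P {ω | I ⟨0, by omega⟩ ω = i}).toReal)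
    (hα2 : α 2 ∈ Set.Ioo (0 : ℝ) 1)
    -- conditional densities: g₁ = 1_{[0,1]} and g₂ = 1_{[1−λ, 2−λ]}
    (hg1 : ∀ s : Set ℝ, MeasurableSet s →
      (P ({ω | I ⟨0, by omega⟩ ω = 1} ∩ (X ⟨0, by omega⟩) ⁻¹' s)).toReal
        = α 1 * ∫ t in s, (Set.Icc (0 : ℝ) 1).indicator (fun _ => (1 : ℝ)) t)
    (hg2 : ∀ s : Set ℝ, MeasurableSet s →
      (P ({ω | I ⟨0, by omega⟩ ω = 2} ∩ (X ⟨0, by omega⟩) ⁻¹' s)).toReal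
        = α 2 * ∫ t in s, (Set.Icc (1 - lam) (2 - lam)).indicator (fun _ => (1 : ℝ)) t)
    -- plug-in estimate of λ and predicted labels
    (lamhat : Ω → ℝ)
    (hlamhat : ∀ ω, lamhat ω
      = 2 - Finset.univ.sup' ⟨⟨0, by omega⟩, Finset.mem_univ _⟩ (fun k => X k ω))
    (Ihat : Fin n → Ω → ℕ)
    (hIhat : ∀ k ω, Ihat k ω =
      if 1 ≤ X k ω then 2 else if X k ω ≤ 1 - lamhat ω then 1 else 0) :
    (∀ k, (P {ω | Ihat k ω ≠ I k ω}).toReal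
        ≤ lam + 1 / n + 2 / α 2 * Real.log n / n) ∧
      Finset.univ.sup' ⟨⟨0, by omega⟩, Finset.mem_univ _⟩
          (fun k => (P {ω | Ihat k ω ≠ I k ω}).toReal)
        ≤ lam + 1 / n + 2 / α 2 * Real.log n / n := by
  obtain ⟨hlam, -⟩ := hlam
  obtain ⟨hα2, -⟩ := hα2
  set k₀ : Fin n := ⟨0, by omega⟩
  set δ := 2 / α 2 * Real.log n / n with hδ
  set Y : Fin n → Ω → ℝ × ℕ := fun k ω => (X k ω, I k ω)
  have hY : ∀ k, IdentDistrib (Y k) (Y k₀) P P := fun k =>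
    ⟨((hXmeas k).prodMk (hImeas k)).aemeasurable,
      ((hXmeas k₀).prodMk (hImeas k₀)).aemeasurable, hident k⟩
  have hα1 : 0 ≤ α 1 := hα 1 ▸ measureReal_nonneg
  have hαsum : α 1 + α 2 ≤ 1 := by
    rw [hα, hα]; exact measureReal_eq_add_measureReal_eq_le_one (hImeas k₀) (by norm_num)
  have hδ0 : 0 < δ := by
    have := Real.log_pos (by exact_mod_cast hn : (1 : ℝ) < n)
    positivity
  suffices h : ∀ k, P.real {ω | Ihat k ω ≠ I k ω} ≤ lam + 1 / n + δ from
    ⟨h, Finset.sup'_le _ _ fun k _ => h k⟩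
  intro k
  rcases le_or_gt 1 δ with hδ1 | hδ1
  · have : 0 ≤ lam + 1 / n := by positivity
    linarith [measureReal_le_one (μ := P) (s := {ω | Ihat k ω ≠ I k ω})]
  have hA : P.real {ω | I k ω = 2 ∧ X k ω < 1} ≤ α 2 * lam :=
    ((hY k).measureReal_mem_eq (s := {p | p.2 = 2 ∧ p.1 < 1}) (by measurability)).trans_le
      (measureReal_label_two_lt_one_le hg2 hα2.le hlam.le)
  have hB : P.real {ω | I k ω = 1 ∧ 1 - (lam + δ) < X k ω} ≤ α 1 * (lam + δ) :=
    ((hY k).measureReal_mem_eq (s := {p | p.2 = 1 ∧ 1 - (lam + δ) < p.1})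
      (by measurability)).trans_le (measureReal_label_one_gt_le hg1 hα1 (by positivity))
  have hC : P.real {ω | ∀ j, X j ω < 2 - (lam + δ)} ≤ 1 / n :=
    hindep.measureReal_forall_mem_le_one_div (by omega) hY (S := Prod.fst ⁻¹' Iio (2 - (lam + δ)))
      (measurable_fst measurableSet_Iio)
      ((measureReal_lt_two_sub_le (hXmeas k₀) hg2 hα2.le hδ1.le).trans_eq (by rw [hδ]; field_simp))
  calc P.real {ω | Ihat k ω ≠ I k ω}
      ≤ P.real {ω | I k ω = 2 ∧ X k ω < 1} + P.real {ω | I k ω = 1 ∧ 1 - (lam + δ) < X k ω}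
        + P.real {ω | ∀ j, X j ω < 2 - (lam + δ)} :=
      (measureReal_mono (misclassified_subset _ hIrange hlamhat hIhat (by positivity) k)).trans
        ((measureReal_union_le _ _).trans (add_le_add_left (measureReal_union_le _ _) _))
    _ ≤ α 2 * lam + α 1 * (lam + δ) + 1 / n := by gcongr
    _ ≤ lam + 1 / n + δ := by nlinarith
end

section
/- Almost surely, for every k ∈ {1,…,n} and every i ∈ {1,2}, the event Î_k = i implies I_k = i; that is, all observations receiving a nonzero predicted label are correctly classified, and misclassified observations can only receive the label 0. -/
open MeasureTheory ProbabilityTheory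

/-!
Almost surely component `1` lies in `[0, 1)` and component `2` in `[1 - λ, 2 - λ)`, so every
observation, hence also the maximum, is below `2 - λ`, i.e. `λ̂ > λ`. A point labelled `2`
satisfies `X ≥ 1`, impossible for component `1`; a point labelled `1` satisfies
`X ≤ 1 - λ̂ < 1 - λ`, impossible for component `2`.
-/

noncomputable def plugInLabel (lamhat x : ℝ) : ℕ :=
  if 1 ≤ x then 2 else if x ≤ 1 - lamhat then 1 else 0

lemma eq_of_plugInLabel_eq {lam lamhat x : ℝ} {label i : ℕ} (hlamhat : lam < lamhat)
    (hlabel : label = 1 ∨ label = 2) (h1 : label = 1 → x < 1) (h2 : label = 2 → 1 - lam ≤ x)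
    (hi : i = 1 ∨ i = 2) (hpred : plugInLabel lamhat x = i) : label = i := by
  unfold plugInLabel at hpred
  subst hpred
  split_ifs at hi ⊢ with hx1 hx2
  · rcases hlabel with rfl | rfl
    · exact absurd (h1 rfl) (not_lt.2 hx1)
    · rfl
  · rcases hlabel with rfl | rfl
    · rfl
    · linarith [h2 rfl]
  · simp at hi

lemma ae_mem_of_density_indicator {Ω : Type*} [MeasurableSpace Ω] {P : Measure Ω}
    [IsFiniteMeasure P] {E : Set Ω} {X : Ω → ℝ} {A B : Set ℝ} {c : ℝ} (hA : MeasurableSet A)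
    (hdens : (P (E ∩ X ⁻¹' Bᶜ)).toReal = c * ∫ t in Bᶜ, A.indicator (fun _ => (1 : ℝ)) t)
    (hAB : volume (A \ B) = 0) :
    ∀ᵐ ω ∂P, ω ∈ E → X ω ∈ B := by
  have hint : ∫ t in Bᶜ, A.indicator (fun _ => (1 : ℝ)) t = 0 := by
    have : ∫ t in Bᶜ, A.indicator (fun _ => (1 : ℝ)) t = (volume.restrict Bᶜ).real A :=
      integral_indicator_one hA
    rw [this, measureReal_restrict_apply hA, ← Set.sdiff_eq, measureReal_def, hAB,
      ENNReal.toReal_zero]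
  have hnull : P (E ∩ X ⁻¹' Bᶜ) = 0 := by
    rw [← measureReal_eq_zero_iff, measureReal_def, hdens, hint, mul_zero]
  filter_upwards [measure_eq_zero_iff_ae_notMem.1 hnull] with ω hω hE
  by_contra hX
  exact hω ⟨hE, hX⟩

theorem stmt_4_general {Ω : Type*} [MeasurableSpace Ω] (P : Measure Ω) [IsProbabilityMeasure P]
    (n : ℕ) (hn : 1 ≤ n) (lam : ℝ) (hlam : lam ∈ Set.Ioo (0 : ℝ) 1)
    (X : Fin n → Ω → ℝ) (I : Fin n → Ω → ℕ)
    (hXmeas : ∀ k, Measurable (X k)) (hImeas : ∀ k, Measurable (I k))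
    (hIrange : ∀ k ω, I k ω = 1 ∨ I k ω = 2)
    (hident : ∀ k : Fin n,
      Measure.map (fun ω => (X k ω, I k ω)) P
        = Measure.map (fun ω => (X ⟨0, hn⟩ ω, I ⟨0, hn⟩ ω)) P)
    -- mixture weights
    (α : ℕ → ℝ)
    -- conditional densities: g₁ = 1_{[0,1]} and g₂ = 1_{[1−λ, 2−λ]}
    (hg1 : ∀ s : Set ℝ, MeasurableSet s →
      (P ({ω | I ⟨0, hn⟩ ω = 1} ∩ (X ⟨0, hn⟩) ⁻¹' s)).toReal
        = α 1 * ∫ t in s, (Set.Icc (0 : ℝ) 1).indicator (fun _ => (1 : ℝ)) t)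
    (hg2 : ∀ s : Set ℝ, MeasurableSet s →
      (P ({ω | I ⟨0, hn⟩ ω = 2} ∩ (X ⟨0, hn⟩) ⁻¹' s)).toReal
        = α 2 * ∫ t in s, (Set.Icc (1 - lam) (2 - lam)).indicator (fun _ => (1 : ℝ)) t)
    -- plug-in estimate of λ and predicted labels
    (lamhat : Ω → ℝ)
    (hlamhat : ∀ ω, lamhat ω
      = 2 - Finset.univ.sup' ⟨⟨0, hn⟩, Finset.mem_univ _⟩ (fun k => X k ω))
    (Ihat : Fin n → Ω → ℕ)
    (hIhat : ∀ k ω, Ihat k ω =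
      if 1 ≤ X k ω then 2 else if X k ω ≤ 1 - lamhat ω then 1 else 0) :
    ∀ᵐ ω ∂P, ∀ k : Fin n, ∀ i : ℕ, (i = 1 ∨ i = 2) → Ihat k ω = i → I k ω = i := by
  set k₀ : Fin n := ⟨0, hn⟩
  let Z : Fin n → Ω → ℝ × ℕ := fun k ω => (X k ω, I k ω)
  let T : Set (ℝ × ℕ) :=
    {p | (p.2 = 1 → p.1 < 1) ∧ (p.2 = 2 → p.1 ∈ Set.Ico (1 - lam) (2 - lam))}
  have hT : MeasurableSet T :=
    ((measurable_snd (measurableSet_singleton 1)).imp (measurable_fst measurableSet_Iio)).inter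
      ((measurable_snd (measurableSet_singleton 2)).imp (measurable_fst measurableSet_Ico))
  have hZ₀ : ∀ᵐ ω ∂P, Z k₀ ω ∈ T := by
    have hnull₁ : volume (Set.Icc (0 : ℝ) 1 \ Set.Iio 1) = 0 :=
      measure_mono_null (fun t ⟨⟨_, ht₁⟩, ht₂⟩ => le_antisymm ht₁ (not_lt.1 ht₂))
        Real.volume_singleton
    have hnull₂ : volume (Set.Icc (1 - lam) (2 - lam) \ Set.Ico (1 - lam) (2 - lam)) = 0 := by
      rw [Set.Icc_sdiff_Ico_same (by linarith), Real.volume_singleton]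
    filter_upwards [ae_mem_of_density_indicator measurableSet_Icc
        (hg1 _ measurableSet_Iio.compl) hnull₁,
      ae_mem_of_density_indicator measurableSet_Icc (hg2 _ measurableSet_Ico.compl) hnull₂]
      with ω h₁ h₂ using ⟨h₁, h₂⟩
  have hZmeas : ∀ k, Measurable (Z k) := fun k => (hXmeas k).prodMk (hImeas k)
  have hZ : ∀ᵐ ω ∂P, ∀ k, Z k ω ∈ T := ae_all_iff.2 fun k =>
    IdentDistrib.ae_mem_snd
      ⟨(hZmeas k₀).aemeasurable, (hZmeas k).aemeasurable, (hident k).symm⟩ hT hZ₀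
  filter_upwards [hZ] with ω hω k i hi hpred
  have hlt : lam < lamhat ω := by
    have hmax := (Finset.sup'_lt_iff ⟨k₀, Finset.mem_univ _⟩ (a := 2 - lam)).2
      fun k _ => (hIrange k ω).elim (fun h => by linarith [(hω k).1 h, hlam.2])
        fun h => ((hω k).2 h).2
    rw [hlamhat]
    linarith
  exact eq_of_plugInLabel_eq hlt (hIrange k ω) (hω k).1 (fun h => ((hω k).2 h).1) hi
    ((hIhat k ω).symm.trans hpred)

/-- In the two-component uniform mixture with overlap `λ` and the plug-in rule based on
`λ̂ = 2 − max_k X_k`, almost surely every observation receiving a nonzero predicted label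
is correctly classified: `Î_k = i` implies `I_k = i` for `i ∈ {1,2}`. -/
theorem stmt_4 {Ω : Type*} [MeasurableSpace Ω] (P : Measure Ω) [IsProbabilityMeasure P]
    (n : ℕ) (hn : 1 ≤ n) (lam : ℝ) (hlam : lam ∈ Set.Ioo (0 : ℝ) 1)
    (X : Fin n → Ω → ℝ) (I : Fin n → Ω → ℕ)
    (hXmeas : ∀ k, Measurable (X k)) (hImeas : ∀ k, Measurable (I k))
    (hIrange : ∀ k ω, I k ω = 1 ∨ I k ω = 2)
    -- the pairs (X_k, I_k) are i.i.d.
    (hindep : iIndepFun (fun k ω => (X k ω, I k ω)) P)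
    (hident : ∀ k : Fin n,
      Measure.map (fun ω => (X k ω, I k ω)) P
        = Measure.map (fun ω => (X ⟨0, hn⟩ ω, I ⟨0, hn⟩ ω)) P)
    -- mixture weights
    (α : ℕ → ℝ) (hα : ∀ i, α i = (P {ω | I ⟨0, hn⟩ ω = i}).toReal)
    (hα1 : α 1 ∈ Set.Ioo (0 : ℝ) 1) (hα2 : α 2 ∈ Set.Ioo (0 : ℝ) 1)
    -- conditional densities: g₁ = 1_{[0,1]} and g₂ = 1_{[1−λ, 2−λ]}
    (hg1 : ∀ s : Set ℝ, MeasurableSet s →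
      (P ({ω | I ⟨0, hn⟩ ω = 1} ∩ (X ⟨0, hn⟩) ⁻¹' s)).toReal
        = α 1 * ∫ t in s, (Set.Icc (0 : ℝ) 1).indicator (fun _ => (1 : ℝ)) t)
    (hg2 : ∀ s : Set ℝ, MeasurableSet s →
      (P ({ω | I ⟨0, hn⟩ ω = 2} ∩ (X ⟨0, hn⟩) ⁻¹' s)).toReal
        = α 2 * ∫ t in s, (Set.Icc (1 - lam) (2 - lam)).indicator (fun _ => (1 : ℝ)) t)
    -- plug-in estimate of λ and predicted labels
    (lamhat : Ω → ℝ)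
    (hlamhat : ∀ ω, lamhat ω
      = 2 - Finset.univ.sup' ⟨⟨0, hn⟩, Finset.mem_univ _⟩ (fun k => X k ω))
    (Ihat : Fin n → Ω → ℕ)
    (hIhat : ∀ k ω, Ihat k ω =
      if 1 ≤ X k ω then 2 else if X k ω ≤ 1 - lamhat ω then 1 else 0) :
    ∀ᵐ ω ∂P, ∀ k : Fin n, ∀ i : ℕ, (i = 1 ∨ i = 2) → Ihat k ω = i → I k ω = i :=
  stmt_4_general P n hn lam hlam X I hXmeas hImeas hIrange hident α hg1 hg2 lamhat hlamhat Ihat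
    hIhat
end

section
/- Let r > 0 and let S_1,…,S_M be nonempty connected subsets of ℝ^d with dist(S_i, S_j) > 2r for all i ≠ j; set S = S_1 ∪ … ∪ S_M. Let x_1,…,x_n ∈ ℝ^d be points such that (i) every x_k belongs to S + r, and (ii) S ⊆ ∪_{k : x_k ∈ S} B(x_k, r). Then the union ∪_{k=1}^n B(x_k, r) has at most M connected components. -/
open Metric

/-- The closed `r`-neighborhood `S + r = {x : ∃ y ∈ S, ‖x − y‖ ≤ r}` of a set `S`. -/
def closedNbhd {E : Type*} [PseudoMetricSpace E] (S : Set E) (r : ℝ) : Set E :=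
  {x | ∃ y ∈ S, dist x y ≤ r}

/-- The number of connected components of a subset `U` of a topological space. -/
noncomputable def numCC {E : Type*} [TopologicalSpace E] (U : Set E) : ℕ :=
  Nat.card (ConnectedComponents U)

/-- If `S_1, …, S_M` are nonempty connected sets with `dist(S_i, S_j) > 2r` for `i ≠ j`,
every point `x_k` lies in `S + r` where `S = ∪_i S_i`, and
`S ⊆ ∪_{k : x_k ∈ S} B(x_k, r)`, then `∪_{k=1}^n B(x_k, r)` has at most `M` connected
components. -/
theorem stmt_9 (d M n : ℕ) (r : ℝ) (hr : 0 < r)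
    (S : Fin M → Set (EuclideanSpace ℝ (Fin d)))
    (hSne : ∀ i, (S i).Nonempty) (hSconn : ∀ i, IsPreconnected (S i))
    (hsep : ∀ i j, i ≠ j → ∃ δ, 2 * r < δ ∧ ∀ x ∈ S i, ∀ y ∈ S j, δ ≤ dist x y)
    (x : Fin n → EuclideanSpace ℝ (Fin d))
    (hx1 : ∀ k, x k ∈ closedNbhd (⋃ i, S i) r)
    (hx2 : (⋃ i, S i) ⊆ ⋃ k ∈ {k : Fin n | x k ∈ ⋃ i, S i}, closedBall (x k) r) :
    numCC (⋃ k, closedBall (x k) r) ≤ M := by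
  classical
  -- assign to each k the (unique) index i with dist(x k, S i) ≤ r
  have hex : ∀ k, ∃ i, ∃ y ∈ S i, dist (x k) y ≤ r := by
    intro k
    obtain ⟨y, hy, hd⟩ := hx1 k
    obtain ⟨i, hi⟩ := Set.mem_iUnion.mp hy
    exact ⟨i, y, hi, hd⟩
  choose f yf hyf hdf using hex
  have huniq : ∀ k i, (∃ y ∈ S i, dist (x k) y ≤ r) → i = f k := by
    rintro k i ⟨y, hy, hd⟩
    by_contra hne
    obtain ⟨δ, hδ, hsep'⟩ := hsep i (f k) hne
    have h1 := hsep' y hy (yf k) (hyf k)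
    have h2 : dist y (yf k) ≤ 2 * r := by
      calc dist y (yf k) ≤ dist y (x k) + dist (x k) (yf k) := dist_triangle _ _ _
        _ ≤ r + r := add_le_add (by rw [dist_comm]; exact hd) (hdf k)
        _ = 2 * r := by ring
    linarith
  set U : Set (EuclideanSpace ℝ (Fin d)) := ⋃ k, closedBall (x k) r with hU
  -- every point of U lies in some ball
  have hmem : ∀ u : U, ∃ k, (u : EuclideanSpace ℝ (Fin d)) ∈ closedBall (x k) r := fun u => Set.mem_iUnion.mp u.2
  choose g hg using hmem
  -- covering of S i by balls with index i
  have hScov : ∀ i, ∀ y ∈ S i, ∃ k, f k = i ∧ y ∈ closedBall (x k) r := by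
    intro i y hy
    have hyS : y ∈ ⋃ j, S j := Set.mem_iUnion.mpr ⟨i, hy⟩
    obtain ⟨k, _, hyk⟩ := Set.mem_iUnion₂.mp (hx2 hyS)
    refine ⟨k, (huniq k i ⟨y, hy, ?_⟩).symm, hyk⟩
    rw [dist_comm]; exact mem_closedBall.mp hyk
  have hSU : ∀ i, S i ⊆ U := by
    intro i y hy
    obtain ⟨k, _, hyk⟩ := hScov i y hy
    exact Set.mem_iUnion.mpr ⟨k, hyk⟩
  -- key: two points of U in balls with the same index i lie in the same component of U
  have key : ∀ i (a b : U), (∃ k, f k = i ∧ (a : EuclideanSpace ℝ (Fin d)) ∈ closedBall (x k) r) →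
      (∃ k, f k = i ∧ (b : EuclideanSpace ℝ (Fin d)) ∈ closedBall (x k) r) →
      ConnectedComponents.mk a = ConnectedComponents.mk b := by
    rintro i a b ⟨ka, hka, ha⟩ ⟨kb, hkb, hb⟩
    set T : Set (EuclideanSpace ℝ (Fin d)) := ⋃ k : {k // f k = i}, (S i ∪ closedBall (x k.1) r) with hT
    have hTpre : IsPreconnected T := by
      obtain ⟨y0, hy0⟩ := hSne i
      refine isPreconnected_iUnion ⟨y0, ?_⟩ ?_
      · exact Set.mem_iInter.mpr fun k => Or.inl hy0
      · intro k
        obtain ⟨y1, hy1⟩ : ((S i) ∩ closedBall (x k.1) r).Nonempty := by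
          refine ⟨yf k.1, ?_, ?_⟩
          · have := hyf k.1; rwa [k.2] at this
          · exact mem_closedBall'.mpr (hdf k.1)
        exact IsPreconnected.union y1 hy1.1 hy1.2 (hSconn i)
          ((convex_closedBall _ _).isPreconnected)
    have hTU : T ⊆ U := by
      refine Set.iUnion_subset fun k => Set.union_subset (hSU i) ?_
      exact fun z hz => Set.mem_iUnion.mpr ⟨k.1, hz⟩
    have hpre : IsPreconnected ((Subtype.val : U → EuclideanSpace ℝ (Fin d)) ⁻¹' T) := by
      rw [← Topology.IsInducing.subtypeVal.isPreconnected_image]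
      rwa [Subtype.image_preimage_coe, Set.inter_eq_right.mpr hTU]
    have haT : a ∈ (Subtype.val : U → EuclideanSpace ℝ (Fin d)) ⁻¹' T :=
      Set.mem_iUnion.mpr ⟨⟨ka, hka⟩, Or.inr ha⟩
    have hbT : b ∈ (Subtype.val : U → EuclideanSpace ℝ (Fin d)) ⁻¹' T :=
      Set.mem_iUnion.mpr ⟨⟨kb, hkb⟩, Or.inr hb⟩
    have := hpre.subset_connectedComponent hbT haT
    exact ConnectedComponents.coe_eq_coe'.mpr this
  -- build injection from components into Fin M
  obtain ⟨rep, hrep⟩ := (ConnectedComponents.surjective_coe (α := U)).hasRightInverse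
  have hinj : Function.Injective (fun c : ConnectedComponents U => f (g (rep c))) := by
    intro c c' h
    have h1 : ConnectedComponents.mk (rep c) = ConnectedComponents.mk (rep c') :=
      key (f (g (rep c))) _ _ ⟨g (rep c), rfl, hg _⟩ ⟨g (rep c'), h.symm, hg _⟩
    rw [hrep c, hrep c'] at h1
    exact h1
  have := Nat.card_le_card_of_injective _ hinj
  simpa [numCC] using this
end

section
/- Let n ≥ 1, α ∈ (0,1], and let N be a binomial random variable with parameters n and α. Then E[(nα)²/N² · 1{N > 0}] ≤ 6. -/
/-!
Writing `p(n, α, k) = C(n, k) αᵏ (1 - α)ⁿ⁻ᵏ`, the identity `(n + 1)(n + 2) C(n, k) = (k + 1)(k + 2) C(n + 2, k + 2)`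
together with `n² ≤ (n + 1)(n + 2)` and `(k + 1)(k + 2) ≤ 6k²` for `k ≥ 1` gives the termwise bound
`p(n, α, k) · (nα)² / k² ≤ 6 p(n + 2, α, k + 2)`. Summing over `k` bounds the expectation by six times
a partial sum of the `Binomial(n + 2, α)` distribution, hence by `6`.
-/

open MeasureTheory Finset

noncomputable def binomWeight (n : ℕ) (α : ℝ) (k : ℕ) : ℝ :=
  n.choose k * α ^ k * (1 - α) ^ (n - k)

section binomWeight

variable {n : ℕ} {α : ℝ}

lemma binomWeight_nonneg (h0 : 0 ≤ α) (h1 : α ≤ 1) (k : ℕ) : 0 ≤ binomWeight n α k := by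
  have : 0 ≤ 1 - α := sub_nonneg.mpr h1
  unfold binomWeight
  positivity

lemma binomWeight_eq_zero_of_lt {k : ℕ} (h : n < k) : binomWeight n α k = 0 := by
  simp [binomWeight, Nat.choose_eq_zero_of_lt h]

lemma binomWeight_eq_zero_of_notMem_range {k : ℕ} (h : k ∉ range (n + 1)) :
    binomWeight n α k = 0 :=
  binomWeight_eq_zero_of_lt (by simpa [Nat.lt_succ_iff] using h)

lemma sum_range_binomWeight (n : ℕ) (α : ℝ) : ∑ k ∈ range (n + 1), binomWeight n α k = 1 := by
  have := add_pow α (1 - α) n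
  rw [add_sub_cancel, one_pow] at this
  rw [this]
  exact sum_congr rfl fun k _ => by unfold binomWeight; ring

lemma hasSum_binomWeight (n : ℕ) (α : ℝ) : HasSum (binomWeight n α) 1 :=
  sum_range_binomWeight n α ▸ hasSum_sum_of_ne_finset_zero fun _ => binomWeight_eq_zero_of_notMem_range

lemma summable_binomWeight_mul (g : ℕ → ℝ) : Summable fun k => binomWeight n α k * g k :=
  summable_of_ne_finset_zero (s := range (n + 1)) fun k hk => by
    rw [binomWeight_eq_zero_of_notMem_range hk, zero_mul]

end binomWeight

lemma add_one_mul_add_two_mul_choose (n k : ℕ) :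
    (n + 1) * (n + 2) * n.choose k = (k + 1) * (k + 2) * (n + 2).choose (k + 2) := by
  have h1 := Nat.add_one_mul_choose_eq n k
  have h2 := Nat.add_one_mul_choose_eq (n + 1) (k + 1)
  calc (n + 1) * (n + 2) * n.choose k = (n + 2) * ((n + 1) * n.choose k) := by ring
    _ = (k + 1) * ((n + 2) * (n + 1).choose (k + 1)) := by rw [h1]; ring
    _ = (k + 1) * (k + 2) * (n + 2).choose (k + 2) := by rw [h2]; ring

lemma choose_mul_sq_le {n k : ℕ} (hk : 1 ≤ k) :
    (n.choose k : ℝ) * n ^ 2 ≤ 6 * (n + 2).choose (k + 2) * k ^ 2 := by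
  have hid : ((n : ℝ) + 1) * (n + 2) * n.choose k = (k + 1) * (k + 2) * (n + 2).choose (k + 2) := by
    exact_mod_cast add_one_mul_add_two_mul_choose n k
  have hk' : (1 : ℝ) ≤ k := by exact_mod_cast hk
  have hC : (0 : ℝ) ≤ n.choose k := Nat.cast_nonneg _
  have hC2 : (0 : ℝ) ≤ (n + 2).choose (k + 2) := Nat.cast_nonneg _
  -- `6k² - (k + 1)(k + 2) = (k - 1)(5k + 2)`
  nlinarith [mul_nonneg hC2 (mul_nonneg (sub_nonneg.mpr hk') (by linarith : (0 : ℝ) ≤ 5 * k + 2))]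

lemma binomWeight_mul_div_sq_le {n k : ℕ} {α : ℝ} (h0 : 0 ≤ α) (h1 : α ≤ 1) (hk : 0 < k) :
    binomWeight n α k * ((n * α) ^ 2 / k ^ 2) ≤ 6 * binomWeight (n + 2) α (k + 2) := by
  have hk2 : (0 : ℝ) < (k : ℝ) ^ 2 := by positivity
  have hrest : 0 ≤ α ^ (k + 2) * (1 - α) ^ (n - k) := by
    have : 0 ≤ 1 - α := sub_nonneg.mpr h1
    positivity
  calc binomWeight n α k * ((n * α) ^ 2 / k ^ 2)
      = (n.choose k * n ^ 2 / k ^ 2) * (α ^ (k + 2) * (1 - α) ^ (n - k)) := by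
        unfold binomWeight; field_simp; ring
    _ ≤ (6 * (n + 2).choose (k + 2)) * (α ^ (k + 2) * (1 - α) ^ (n - k)) := by
        gcongr
        rw [div_le_iff₀ hk2]
        exact choose_mul_sq_le hk
    _ = 6 * binomWeight (n + 2) α (k + 2) := by
        rw [binomWeight, Nat.add_sub_add_right]; ring

lemma integral_comp_eq_tsum_binomWeight {Ω : Type*} [MeasurableSpace Ω] {P : Measure Ω}
    [IsProbabilityMeasure P] {n : ℕ} {α : ℝ} {N : Ω → ℕ} (hN : Measurable N)
    (hbinom : ∀ k : ℕ, (P {ω | N ω = k}).toReal = binomWeight n α k)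
    {g : ℕ → ℝ} {C : ℝ} (hg : ∀ k, ‖g k‖ ≤ C) :
    ∫ ω, g (N ω) ∂P = ∑' k, binomWeight n α k * g k := by
  have : IsProbabilityMeasure (P.map N) := Measure.isProbabilityMeasure_map hN.aemeasurable
  have hint : Integrable g (P.map N) :=
    .of_bound measurable_from_top.aestronglyMeasurable C (.of_forall hg)
  rw [← integral_map hN.aemeasurable measurable_from_top.aestronglyMeasurable,
    integral_countable hint]
  refine tsum_congr fun k => ?_
  rw [measureReal_def, Measure.map_apply hN (measurableSet_singleton k), smul_eq_mul]
  exact congrArg (· * g k) (hbinom k)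

theorem stmt_11_general {Ω : Type*} [MeasurableSpace Ω] (P : Measure Ω) [IsProbabilityMeasure P]
    (n : ℕ) (α : ℝ) (hα0 : 0 < α) (hα1 : α ≤ 1)
    (N : Ω → ℕ) (hNmeas : Measurable N)
    (hbinom : ∀ k : ℕ,
      (P {ω | N ω = k}).toReal = (n.choose k : ℝ) * α ^ k * (1 - α) ^ (n - k)) :
    (∫ ω, (if 0 < N ω then ((n : ℝ) * α) ^ 2 / (N ω : ℝ) ^ 2 else 0) ∂P) ≤ 6 := by
  set G : ℕ → ℝ := fun k => if 0 < k then ((n : ℝ) * α) ^ 2 / (k : ℝ) ^ 2 else 0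
  have hG : ∀ k, ‖G k‖ ≤ ((n : ℝ) * α) ^ 2 := fun k => by
    by_cases hk : 0 < k
    · have hk2 : (1 : ℝ) ≤ (k : ℝ) ^ 2 := one_le_pow₀ (by exact_mod_cast hk)
      simp only [G, hk, if_true]
      rw [Real.norm_of_nonneg (by positivity)]
      exact div_le_self (sq_nonneg _) hk2
    · simpa [G, hk] using sq_nonneg ((n : ℝ) * α)
  have hterm : ∀ k, binomWeight n α k * G k ≤ 6 * binomWeight (n + 2) α (k + 2) := fun k => by
    by_cases hk : 0 < k
    · simpa [G, hk] using binomWeight_mul_div_sq_le hα0.le hα1 hk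
    · simpa [G, hk] using binomWeight_nonneg hα0.le hα1 (k + 2)
  have hsum := (hasSum_binomWeight (n + 2) α).summable
  calc ∫ ω, G (N ω) ∂P = ∑' k, binomWeight n α k * G k :=
        integral_comp_eq_tsum_binomWeight hNmeas hbinom hG
    _ ≤ ∑' k, 6 * binomWeight (n + 2) α (k + 2) :=
        (summable_binomWeight_mul G).tsum_le_tsum hterm
          ((hsum.comp_injective (add_left_injective 2)).mul_left 6)
    _ = 6 * ∑' k, binomWeight (n + 2) α (k + 2) := tsum_mul_left
    _ ≤ 6 * ∑' j, binomWeight (n + 2) α j := mul_le_mul_of_nonneg_left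
        (tsum_comp_le_tsum_of_inj hsum (binomWeight_nonneg hα0.le hα1) (add_left_injective 2))
        (by norm_num)
    _ = 6 := by rw [(hasSum_binomWeight (n + 2) α).tsum_eq, mul_one]

/-- If `N ~ Binomial(n, α)` with `n ≥ 1` and `α ∈ (0,1]`, then
`E[(nα)² / N² · 1{N > 0}] ≤ 6`. -/
theorem stmt_11 {Ω : Type*} [MeasurableSpace Ω] (P : Measure Ω) [IsProbabilityMeasure P]
    (n : ℕ) (hn : 1 ≤ n) (α : ℝ) (hα0 : 0 < α) (hα1 : α ≤ 1)
    (N : Ω → ℕ) (hNmeas : Measurable N)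
    (hbinom : ∀ k : ℕ,
      (P {ω | N ω = k}).toReal = (n.choose k : ℝ) * α ^ k * (1 - α) ^ (n - k)) :
    (∫ ω, (if 0 < N ω then ((n : ℝ) * α) ^ 2 / (N ω : ℝ) ^ 2 else 0) ∂P) ≤ 6 :=
  stmt_11_general P n α hα0 hα1 N hNmeas hbinom
end

section
/- Let σ > 0, μ₁ < μ₂ real numbers, ℓ = μ₂ − μ₁, α₁ ∈ (0,1) and α₂ = 1 − α₁. Define the Laplace densities g_i(x) = (2σ)⁻¹ exp(−|x − μ_i|/σ) for i = 1,2, the mixture f = α₁g₁ + α₂g₂, and the thresholds t_* = (√(α₁α₂)/σ)·exp(−ℓ/(2σ)) and t_i^* = (2σ)⁻¹(α_i + (1−α_i)exp(−ℓ/σ)) for i = 1,2. If log(α₁/(1−α₁)) ∈ (−ℓ/σ, ℓ/σ), then for every t ∈ (t_*, min(t₁^*, t₂^*)), the level set {x ∈ ℝ : f(x) ≥ t} has exactly two connected components. -/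
set_option maxHeartbeats 1000000


/-- For a two-component Laplace mixture `f = α₁ g₁ + α₂ g₂` with scale `σ` and
locations `μ₁ < μ₂` at distance `ℓ`, if `log(α₁/(1-α₁)) ∈ (-ℓ/σ, ℓ/σ)` then for every
threshold `t ∈ (t_*, min(t₁^*, t₂^*))` the level set `{x : f x ≥ t}` has exactly two
connected components. -/
theorem stmt_13 (σ : ℝ) (hσ : 0 < σ) (μ₁ μ₂ : ℝ) (hμ : μ₁ < μ₂)
    (ℓ : ℝ) (hℓ : ℓ = μ₂ - μ₁)
    (α₁ α₂ : ℝ) (hα₁ : α₁ ∈ Set.Ioo (0 : ℝ) 1) (hα₂ : α₂ = 1 - α₁)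
    (g₁ g₂ f : ℝ → ℝ)
    (hg₁ : ∀ x, g₁ x = (2 * σ)⁻¹ * Real.exp (-|x - μ₁| / σ))
    (hg₂ : ∀ x, g₂ x = (2 * σ)⁻¹ * Real.exp (-|x - μ₂| / σ))
    (hf : ∀ x, f x = α₁ * g₁ x + α₂ * g₂ x)
    (tstar t₁ t₂ : ℝ)
    (htstar : tstar = Real.sqrt (α₁ * α₂) / σ * Real.exp (-ℓ / (2 * σ)))
    (ht₁ : t₁ = (2 * σ)⁻¹ * (α₁ + (1 - α₁) * Real.exp (-ℓ / σ)))
    (ht₂ : t₂ = (2 * σ)⁻¹ * (α₂ + (1 - α₂) * Real.exp (-ℓ / σ)))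
    (hcond : Real.log (α₁ / (1 - α₁)) ∈ Set.Ioo (-ℓ / σ) (ℓ / σ))
    (t : ℝ) (ht : t ∈ Set.Ioo tstar (min t₁ t₂)) :
    ∃ A B : Set ℝ, A.Nonempty ∧ B.Nonempty ∧ Disjoint A B ∧
      A ∪ B = {x | t ≤ f x} ∧
      (∀ x ∈ A, connectedComponentIn {x | t ≤ f x} x = A) ∧
      (∀ x ∈ B, connectedComponentIn {x | t ≤ f x} x = B) := by
  obtain ⟨hα₁0, hα₁1⟩ := hα₁
  have hα₂0 : 0 < α₂ := by rw [hα₂]; linarith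
  have hℓ0 : 0 < ℓ := by rw [hℓ]; linarith
  have hσ2 : (0:ℝ) < (2*σ)⁻¹ := by positivity
  set L := Real.log (α₁ / α₂) with hLdef
  have hcond1 : -ℓ/σ < L := by rw [hLdef, hα₂]; exact hcond.1
  have hcond2 : L < ℓ/σ := by rw [hLdef, hα₂]; exact hcond.2
  have expL : Real.exp L = α₁ / α₂ := Real.exp_log (by positivity)
  set m := (μ₁ + μ₂)/2 + σ*L/2 with hmdef
  have hσL1 : -ℓ < σ * L := by
    have := (div_lt_iff₀ hσ).1 hcond1; linarith
  have hσL2 : σ * L < ℓ := by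
    have := (lt_div_iff₀ hσ).1 hcond2; linarith
  have hm1 : μ₁ < m := by rw [hmdef, hℓ] at *; linarith
  have hm2 : m < μ₂ := by rw [hmdef, hℓ] at *; linarith
  have h2m : 2*m = μ₁ + μ₂ + σ*L := by rw [hmdef]; ring
  have fval : ∀ x, f x = (2*σ)⁻¹ * (α₁ * Real.exp (-|x - μ₁| / σ)
      + α₂ * Real.exp (-|x - μ₂| / σ)) := by
    intro x; rw [hf, hg₁, hg₂]; ring
  have fleft : ∀ u, u ≤ μ₁ → f u = (2*σ)⁻¹ * (α₁ * Real.exp ((u - μ₁)/σ)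
      + α₂ * Real.exp ((u - μ₂)/σ)) := by
    intro u h1
    rw [fval, abs_of_nonpos (by linarith : u - μ₁ ≤ 0),
      abs_of_nonpos (by linarith : u - μ₂ ≤ 0)]
    rw [show -(-(u - μ₁))/σ = (u - μ₁)/σ by ring, show -(-(u - μ₂))/σ = (u - μ₂)/σ by ring]
  have fmid : ∀ u, μ₁ ≤ u → u ≤ μ₂ → f u = (2*σ)⁻¹ * (α₁ * Real.exp ((μ₁ - u)/σ)
      + α₂ * Real.exp ((u - μ₂)/σ)) := by
    intro u h1 h2
    rw [fval, abs_of_nonneg (by linarith : (0:ℝ) ≤ u - μ₁),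
      abs_of_nonpos (by linarith : u - μ₂ ≤ 0)]
    rw [show -(u - μ₁)/σ = (μ₁ - u)/σ by ring, show -(-(u - μ₂))/σ = (u - μ₂)/σ by ring]
  have fright : ∀ u, μ₂ ≤ u → f u = (2*σ)⁻¹ * (α₁ * Real.exp ((μ₁ - u)/σ)
      + α₂ * Real.exp ((μ₂ - u)/σ)) := by
    intro u h1
    rw [fval, abs_of_nonneg (by linarith : (0:ℝ) ≤ u - μ₁),
      abs_of_nonneg (by linarith : (0:ℝ) ≤ u - μ₂)]
    rw [show -(u - μ₁)/σ = (μ₁ - u)/σ by ring, show -(u - μ₂)/σ = (μ₂ - u)/σ by ring]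
  -- monotonicity on (-∞, μ₁]
  have mono₁ : ∀ x y, x ≤ y → y ≤ μ₁ → f x ≤ f y := by
    intro x y hxy hy
    rw [fleft x (by linarith), fleft y hy]
    have h1 : Real.exp ((x - μ₁)/σ) ≤ Real.exp ((y - μ₁)/σ) :=
      Real.exp_le_exp.2 (by gcongr)
    have h2 : Real.exp ((x - μ₂)/σ) ≤ Real.exp ((y - μ₂)/σ) :=
      Real.exp_le_exp.2 (by gcongr)
    have := mul_le_mul_of_nonneg_left h1 hα₁0.le
    have := mul_le_mul_of_nonneg_left h2 hα₂0.le
    nlinarith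
  -- monotonicity on [μ₂, ∞)
  have mono₄ : ∀ x y, μ₂ ≤ x → x ≤ y → f y ≤ f x := by
    intro x y hx hxy
    rw [fright x hx, fright y (by linarith)]
    have h1 : Real.exp ((μ₁ - y)/σ) ≤ Real.exp ((μ₁ - x)/σ) :=
      Real.exp_le_exp.2 (by gcongr)
    have h2 : Real.exp ((μ₂ - y)/σ) ≤ Real.exp ((μ₂ - x)/σ) :=
      Real.exp_le_exp.2 (by gcongr)
    have := mul_le_mul_of_nonneg_left h1 hα₁0.le
    have := mul_le_mul_of_nonneg_left h2 hα₂0.le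
    nlinarith
  -- middle monotonicity, decreasing side
  have mono₂ : ∀ x y, μ₁ ≤ x → x ≤ y → y ≤ μ₂ → x + y ≤ 2*m → f y ≤ f x := by
    intro x y hx hxy hy hsum
    rw [fmid x hx (by linarith), fmid y (by linarith) hy]
    set E := Real.exp (-ℓ/σ) with hE
    set px := Real.exp ((μ₁ - x)/σ) with hpx
    set py := Real.exp ((μ₁ - y)/σ) with hpy
    have hpx0 : 0 < px := Real.exp_pos _
    have hpy0 : 0 < py := Real.exp_pos _
    have hE0 : 0 < E := Real.exp_pos _
    have hqx : Real.exp ((x - μ₂)/σ) = E / px := by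
      rw [eq_div_iff hpx0.ne', hpx, hE, ← Real.exp_add]
      congr 1; rw [hℓ]; ring
    have hqy : Real.exp ((y - μ₂)/σ) = E / py := by
      rw [eq_div_iff hpy0.ne', hpy, hE, ← Real.exp_add]
      congr 1; rw [hℓ]; ring
    have hpxy : py ≤ px := Real.exp_le_exp.2 (by gcongr)
    have hprod : α₂ * E ≤ α₁ * (px * py) := by
      have e1 : α₂ * E = α₁ * Real.exp (-L + -ℓ/σ) := by
        rw [Real.exp_add, Real.exp_neg, expL, hE]
        field_simp
      have e2 : px * py = Real.exp ((μ₁ - x)/σ + (μ₁ - y)/σ) := (Real.exp_add _ _).symm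
      rw [e1, e2]
      have harg : -L + -ℓ/σ ≤ (μ₁ - x)/σ + (μ₁ - y)/σ := by
        rw [← sub_nonneg, show (μ₁ - x)/σ + (μ₁ - y)/σ - (-L + -ℓ/σ)
          = (μ₁ + μ₂ + σ*L - x - y)/σ by rw [hℓ]; field_simp; ring]
        apply div_nonneg _ hσ.le
        linarith
      exact mul_le_mul_of_nonneg_left (Real.exp_le_exp.2 harg) hα₁0.le
    rw [hqx, hqy]
    have key : α₁ * px + α₂ * (E/px) - (α₁ * py + α₂ * (E/py))
        = (px - py) * (α₁ * (px*py) - α₂*E) / (px*py) := by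
      field_simp; ring
    have h1 : 0 ≤ (px - py) * (α₁ * (px*py) - α₂*E) / (px*py) :=
      div_nonneg (mul_nonneg (by linarith) (by linarith)) (mul_pos hpx0 hpy0).le
    exact mul_le_mul_of_nonneg_left (by linarith) hσ2.le
  -- middle monotonicity, increasing side
  have mono₃ : ∀ x y, μ₁ ≤ x → x ≤ y → y ≤ μ₂ → 2*m ≤ x + y → f x ≤ f y := by
    intro x y hx hxy hy hsum
    rw [fmid x hx (by linarith), fmid y (by linarith) hy]
    set E := Real.exp (-ℓ/σ) with hE
    set px := Real.exp ((μ₁ - x)/σ) with hpx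
    set py := Real.exp ((μ₁ - y)/σ) with hpy
    have hpx0 : 0 < px := Real.exp_pos _
    have hpy0 : 0 < py := Real.exp_pos _
    have hE0 : 0 < E := Real.exp_pos _
    have hqx : Real.exp ((x - μ₂)/σ) = E / px := by
      rw [eq_div_iff hpx0.ne', hpx, hE, ← Real.exp_add]
      congr 1; rw [hℓ]; ring
    have hqy : Real.exp ((y - μ₂)/σ) = E / py := by
      rw [eq_div_iff hpy0.ne', hpy, hE, ← Real.exp_add]
      congr 1; rw [hℓ]; ring
    have hpxy : py ≤ px := Real.exp_le_exp.2 (by gcongr)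
    have hprod : α₁ * (px * py) ≤ α₂ * E := by
      have e1 : α₂ * E = α₁ * Real.exp (-L + -ℓ/σ) := by
        rw [Real.exp_add, Real.exp_neg, expL, hE]
        field_simp
      have e2 : px * py = Real.exp ((μ₁ - x)/σ + (μ₁ - y)/σ) := (Real.exp_add _ _).symm
      rw [e1, e2]
      have harg : (μ₁ - x)/σ + (μ₁ - y)/σ ≤ -L + -ℓ/σ := by
        rw [← sub_nonneg, show -L + -ℓ/σ - ((μ₁ - x)/σ + (μ₁ - y)/σ)
          = (x + y - (μ₁ + μ₂ + σ*L))/σ by rw [hℓ]; field_simp; ring]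
        apply div_nonneg _ hσ.le
        linarith
      exact mul_le_mul_of_nonneg_left (Real.exp_le_exp.2 harg) hα₁0.le
    rw [hqx, hqy]
    have key : α₁ * py + α₂ * (E/py) - (α₁ * px + α₂ * (E/px))
        = (px - py) * (α₂*E - α₁ * (px*py)) / (px*py) := by
      field_simp; ring
    have h1 : 0 ≤ (px - py) * (α₂*E - α₁ * (px*py)) / (px*py) :=
      div_nonneg (mul_nonneg (by linarith) (by linarith)) (mul_pos hpx0 hpy0).le
    exact mul_le_mul_of_nonneg_left (by linarith) hσ2.le
  -- values at the special points
  have fμ₁ : f μ₁ = t₁ := by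
    rw [fmid μ₁ le_rfl hμ.le, ht₁, hα₂]
    rw [show (μ₁ - μ₁)/σ = 0 by simp, show (μ₁ - μ₂)/σ = -ℓ/σ by rw [hℓ]; ring,
      Real.exp_zero]
    ring
  have fμ₂ : f μ₂ = t₂ := by
    rw [fmid μ₂ hμ.le le_rfl, ht₂, hα₂]
    rw [show (μ₂ - μ₂)/σ = 0 by simp, show (μ₁ - μ₂)/σ = -ℓ/σ by rw [hℓ]; ring,
      Real.exp_zero]
    ring
  have fm : f m = tstar := by
    rw [fmid m hm1.le hm2.le, htstar]
    set s₁ := Real.exp ((μ₁ - m)/σ) with hs₁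
    have hs₁0 : 0 < s₁ := Real.exp_pos _
    have heq : α₂ * Real.exp ((m - μ₂)/σ) = α₁ * s₁ := by
      have e : Real.exp ((m - μ₂)/σ) = s₁ * Real.exp L := by
        rw [hs₁, ← Real.exp_add]
        congr 1
        rw [hmdef]; field_simp; ring
      rw [e, expL]
      field_simp
    rw [heq]
    have hsq : (α₁ * s₁)^2 = α₁ * α₂ * Real.exp (-ℓ/σ) := by
      have : (α₁ * s₁)^2 = α₁ * (α₂ * Real.exp ((m - μ₂)/σ)) * s₁ := by rw [heq]; ring
      rw [this, hs₁]
      rw [show α₁ * (α₂ * Real.exp ((m - μ₂)/σ)) * Real.exp ((μ₁ - m)/σ)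
        = α₁ * α₂ * (Real.exp ((m - μ₂)/σ) * Real.exp ((μ₁ - m)/σ)) by ring,
        ← Real.exp_add]
      congr 1
      rw [hℓ]; ring
    have hroot : Real.sqrt (α₁ * α₂) * Real.exp (-ℓ/(2*σ)) = α₁ * s₁ := by
      have e1 : Real.exp (-ℓ/(2*σ)) = Real.sqrt (Real.exp (-ℓ/σ)) := by
        rw [← Real.exp_half]
        congr 1; ring
      rw [e1, ← Real.sqrt_mul (by positivity), ← hsq, Real.sqrt_sq (by positivity)]
    rw [show Real.sqrt (α₁ * α₂) / σ * Real.exp (-ℓ/(2*σ))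
      = (Real.sqrt (α₁ * α₂) * Real.exp (-ℓ/(2*σ))) / σ by ring, hroot]
    field_simp
    ring
  obtain ⟨htl, htr⟩ := ht
  have ht1 : t < t₁ := lt_of_lt_of_le htr (min_le_left _ _)
  have ht2 : t < t₂ := lt_of_lt_of_le htr (min_le_right _ _)
  set S : Set ℝ := {x | t ≤ f x} with hS
  have hmS : m ∉ S := by
    intro h
    have : t ≤ f m := h
    rw [fm] at this
    linarith
  have hμ₁S : μ₁ ∈ S := by show t ≤ f μ₁; rw [fμ₁]; linarith
  have hμ₂S : μ₂ ∈ S := by show t ≤ f μ₂; rw [fμ₂]; linarith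
  refine ⟨S ∩ Set.Iio m, S ∩ Set.Ioi m, ⟨μ₁, hμ₁S, hm1⟩, ⟨μ₂, hμ₂S, hm2⟩, ?_, ?_, ?_, ?_⟩
  · rw [Set.disjoint_left]
    rintro a ⟨_, ha⟩ ⟨_, hb⟩
    exact lt_asymm (Set.mem_Iio.1 ha) (Set.mem_Ioi.1 hb)
  · ext x
    simp only [Set.mem_union, Set.mem_inter_iff, Set.mem_Iio, Set.mem_Ioi]
    constructor
    · rintro (⟨h, _⟩ | ⟨h, _⟩) <;> exact h
    · intro h
      rcases lt_trichotomy x m with hc | hc | hc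
      · exact Or.inl ⟨h, hc⟩
      · exact absurd (hc ▸ h) hmS
      · exact Or.inr ⟨h, hc⟩
  · -- component A
    intro x hx
    have hxS : x ∈ S := hx.1
    have hxm : x < m := hx.2
    have hAord : (S ∩ Set.Iio m).OrdConnected := by
      constructor
      rintro a ⟨haS, ham⟩ b ⟨hbS, hbm⟩ y ⟨hay, hyb⟩
      rw [Set.mem_Iio] at ham hbm
      have hym : y < m := lt_of_le_of_lt hyb hbm
      refine ⟨?_, hym⟩
      rcases le_or_gt y μ₁ with hyμ | hyμ
      · exact le_trans haS (mono₁ a y hay hyμ)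
      · have hbμ₁ : μ₁ ≤ b := by linarith
        exact le_trans hbS (mono₂ y b hyμ.le hyb (by linarith) (by linarith))
    apply le_antisymm
    · intro z hz
      have hzS : z ∈ S := connectedComponentIn_subset S x hz
      have hCord : (connectedComponentIn S x).OrdConnected :=
        isPreconnected_connectedComponentIn.ordConnected
      refine ⟨hzS, ?_⟩
      by_contra hzm
      rw [Set.mem_Iio, not_lt] at hzm
      have hm : m ∈ connectedComponentIn S x :=
        hCord.out (mem_connectedComponentIn hxS) hz ⟨hxm.le, hzm⟩
      exact hmS (connectedComponentIn_subset S x hm)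
    · exact hAord.isPreconnected.subset_connectedComponentIn hx Set.inter_subset_left
  · -- component B
    intro x hx
    have hxS : x ∈ S := hx.1
    have hxm : m < x := hx.2
    have hBord : (S ∩ Set.Ioi m).OrdConnected := by
      constructor
      rintro a ⟨haS, ham⟩ b ⟨hbS, hbm⟩ y ⟨hay, hyb⟩
      rw [Set.mem_Ioi] at ham hbm
      have hym : m < y := lt_of_lt_of_le ham hay
      refine ⟨?_, hym⟩
      rcases le_or_gt μ₂ y with hyμ | hyμ
      · exact le_trans hbS (mono₄ y b hyμ hyb)
      · exact le_trans haS (mono₃ a y (by linarith) hay hyμ.le (by linarith))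
    apply le_antisymm
    · intro z hz
      have hzS : z ∈ S := connectedComponentIn_subset S x hz
      have hCord : (connectedComponentIn S x).OrdConnected :=
        isPreconnected_connectedComponentIn.ordConnected
      refine ⟨hzS, ?_⟩
      by_contra hzm
      rw [Set.mem_Ioi, not_lt] at hzm
      have hm : m ∈ connectedComponentIn S x :=
        hCord.out hz (mem_connectedComponentIn hxS) ⟨hzm, hxm.le⟩
      exact hmS (connectedComponentIn_subset S x hm)
    · exact hBord.isPreconnected.subset_connectedComponentIn hx Set.inter_subset_left
end
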